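/- arXiv:1703.07164 — 13 statements merged into one kernel-verified Lean document; each statement's English description precedes it below -/
import Mathlib

section
/- Let N ≥ 1 and let G be a symmetric real N×N matrix. Then the following are equivalent: (i) for every vector c ∈ ℝ^N with all entries strictly positive, the matrix diag(1/c₁, …, 1/c_N) + G is positive definite; (ii) G is positive semidefinite. -/
/-! Constant vectors `c ≡ 1/ε` turn (i) into `G + ε • 1 ≻ 0` for every `ε > 0`, which forces
`G ⪰ 0` as `ε → 0`; conversely a positive diagonal plus a positive semidefinite matrix is
positive definite. -/

open Matrix

lemma nonneg_of_forall_pos_mul_add_nonneg {R : Type*} [Field R] [LinearOrder R]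
    [IsStrictOrderedRing R] {a b : R} (ha : 0 ≤ a) (h : ∀ ε > 0, 0 ≤ ε * a + b) : 0 ≤ b := by
  by_contra! hb
  have ha1 : 0 < a + 1 := by linarith
  have key := h (-b / (a + 1)) (div_pos (neg_pos.mpr hb) ha1)
  have hval : -b / (a + 1) * a + b = b / (a + 1) := by field_simp; ring
  linarith [div_neg_of_neg_of_pos hb ha1]

namespace Matrix

variable {n R : Type*} [Fintype n] [DecidableEq n] [Field R] [LinearOrder R] [StarRing R]
  [StarOrderedRing R]

theorem posSemidef_of_forall_posSemidef_add_smul_one {A : Matrix n n R}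
    (h : ∀ ε > (0 : R), (A + ε • (1 : Matrix n n R)).PosSemidef) : A.PosSemidef := by
  have hHerm : A.IsHermitian := by
    simpa using (h 1 one_pos).isHermitian.sub isHermitian_one
  refine PosSemidef.of_dotProduct_mulVec_nonneg hHerm fun x => ?_
  refine nonneg_of_forall_pos_mul_add_nonneg (dotProduct_star_self_nonneg x) fun ε hε => ?_
  have := (h ε hε).dotProduct_mulVec_nonneg x
  rwa [add_mulVec, dotProduct_add, smul_mulVec, one_mulVec, dotProduct_smul, smul_eq_mul,
    add_comm] at this

end Matrix

theorem stmt0_general (N : ℕ) (G : Matrix (Fin N) (Fin N) ℝ) :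
    (∀ c : Fin N → ℝ, (∀ i, 0 < c i) →
      (Matrix.diagonal (fun i => (c i)⁻¹) + G).PosDef) ↔ G.PosSemidef := by
  refine ⟨fun h => posSemidef_of_forall_posSemidef_add_smul_one fun ε hε => ?_,
    fun hG c hc => (PosDef.diagonal fun i => inv_pos.mpr (hc i)).add_posSemidef hG⟩
  have := (h (fun _ => ε⁻¹) fun _ => inv_pos.mpr hε).posSemidef
  rwa [inv_inv, ← smul_one_eq_diagonal, add_comm] at this

/-- Lemma 1 of the paper: the PNP-steric free energy density is strictly convex on the
positive orthant (its Hessian `diag(1/c) + G` is positive definite for every positive `c`)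
if and only if the steric interaction matrix `G` is positive semidefinite. -/
theorem stmt0 (N : ℕ) (hN : 1 ≤ N) (G : Matrix (Fin N) (Fin N) ℝ) (hG : G.IsSymm) :
    (∀ c : Fin N → ℝ, (∀ i, 0 < c i) →
      (Matrix.diagonal (fun i => (c i)⁻¹) + G).PosDef) ↔ G.PosSemidef :=
  stmt0_general N G
end

section
/- Fix reals z1, z2 with z2 < 0 < z1, nonnegative reals g11, g22, g12 with z1·g22 − z2·g12 > 0, and c1⁰, c2⁰ > 0. Set m = (z1/z2)·(1/c2⁰ + g22) − g12 and M = (z1·g22 − z2·g12)/(z2·(1 + g11·c1⁰) − z1·g12·c1⁰). Then for all c1, c2 with 0 < c1 ≤ c1⁰ and c2 ≥ c2⁰ one has m·c1 ≤ F(c1, c2) ≤ M·c1 < 0. -/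
/-- The right-hand side of the trajectory ODE `dc1/dc2 = F(c1, c2)` for stationary
solutions of the PNP-steric system. -/
noncomputable def F (z1 z2 g11 g22 g12 c1 c2 : ℝ) : ℝ :=
  (z1 * (1 / c2 + g22) - z2 * g12) / (z2 * (1 / c1 + g11) - z1 * g12)

/-!
Multiplying numerator and denominator by `c1` gives
`F(c1, c2) = c1 · N(c2) / (z2 + c1 K)` with `N(c2) = z1 (1/c2 + g22) - z2 g12` and
`K = z2 g11 - z1 g12 ≤ 0`. For `0 < c1 ≤ c1⁰` and `c2 ≥ c2⁰`, `N` is squeezed between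
`N(∞) = z1 g22 - z2 g12 > 0` and `N(c2⁰)`, and the negative denominator between `z2 + c1⁰ K`
and `z2`; both bounds are then the monotonicity of `n / a` (decreasing in `n`, increasing in
`a < 0` when `n ≥ 0`).
-/

theorem div_le_div_of_le_of_neg {n n' a b : ℝ} (hn : n' ≤ n) (hn' : 0 ≤ n') (hba : b ≤ a)
    (ha : a < 0) : n / a ≤ n' / b :=
  calc n / a ≤ n' / a := div_le_div_of_nonpos_of_le ha.le hn
    _ = n' * (1 / a) := by rw [mul_one_div]
    _ ≤ n' * (1 / b) := mul_le_mul_of_nonneg_left (one_div_le_one_div_of_neg_of_le ha hba) hn'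
    _ = n' / b := by rw [mul_one_div]

theorem F_eq_mul_div {z1 z2 g11 g22 g12 c1 : ℝ} (c2 : ℝ) (hc1 : c1 ≠ 0) :
    F z1 z2 g11 g22 g12 c1 c2 =
      c1 * ((z1 * (1 / c2 + g22) - z2 * g12) / (z2 + c1 * (z2 * g11 - z1 * g12))) := by
  have hden : z2 * (1 / c1 + g11) - z1 * g12 = (z2 + c1 * (z2 * g11 - z1 * g12)) / c1 := by
    field_simp
    ring
  rw [F, hden, div_div_eq_mul_div]
  ring

theorem stmt1_general (z1 z2 g11 g22 g12 c10 c20 : ℝ)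
    (hz2 : z2 < 0) (hz1 : 0 < z1)
    (hg11 : 0 ≤ g11) (hg12 : 0 ≤ g12)
    (hpos : 0 < z1 * g22 - z2 * g12)
    (hc20 : 0 < c20)
    (m M : ℝ)
    (hm : m = z1 / z2 * (1 / c20 + g22) - g12)
    (hM : M = (z1 * g22 - z2 * g12) / (z2 * (1 + g11 * c10) - z1 * g12 * c10)) :
    ∀ c1 c2 : ℝ, 0 < c1 → c1 ≤ c10 → c20 ≤ c2 →
      m * c1 ≤ F z1 z2 g11 g22 g12 c1 c2 ∧
      F z1 z2 g11 g22 g12 c1 c2 ≤ M * c1 ∧ M * c1 < 0 := by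
  intro c1 c2 hc1 hc1c10 hc20c2
  set K := z2 * g11 - z1 * g12
  have hK : K ≤ 0 :=
    sub_nonpos.mpr ((mul_nonpos_of_nonpos_of_nonneg hz2.le hg11).trans (mul_nonneg hz1.le hg12))
  have hN_ge : z1 * g22 - z2 * g12 ≤ z1 * (1 / c2 + g22) - z2 * g12 := by
    linarith [mul_nonneg hz1.le (one_div_nonneg.mpr (hc20.trans_le hc20c2).le)]
  have hN_le : z1 * (1 / c2 + g22) - z2 * g12 ≤ z1 * (1 / c20 + g22) - z2 * g12 := by
    gcongr
  have hden_le : z2 + c1 * K ≤ z2 :=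
    add_le_of_nonpos_right (mul_nonpos_of_nonneg_of_nonpos hc1.le hK)
  have hden_ge : z2 + c10 * K ≤ z2 + c1 * K :=
    add_le_add_right (mul_le_mul_of_nonpos_right hc1c10 hK) z2
  have hm' : m = (z1 * (1 / c20 + g22) - z2 * g12) / z2 := by rw [hm]; field_simp [hz2.ne]
  have hM' : M = (z1 * g22 - z2 * g12) / (z2 + c10 * K) := by rw [hM]; congr 1; simp only [K]; ring
  rw [F_eq_mul_div c2 hc1.ne', hm', hM', mul_comm _ c1, mul_comm _ c1]
  refine ⟨?_, ?_, ?_⟩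
  · exact mul_le_mul_of_nonneg_left
      (div_le_div_of_le_of_neg hN_le (hpos.le.trans hN_ge) hden_le hz2) hc1.le
  · exact mul_le_mul_of_nonneg_left
      (div_le_div_of_le_of_neg hN_ge hpos.le hden_ge (hden_le.trans_lt hz2)) hc1.le
  · exact mul_neg_of_pos_of_neg hc1 (div_neg_of_pos_of_neg hpos 
    (hden_ge.trans_lt (hden_le.trans_lt hz2)))

/-- The bound (bound_dc1_dc2) used in the proof of Lemma 2 of the paper. -/
theorem stmt1 (z1 z2 g11 g22 g12 c10 c20 : ℝ)
    (hz2 : z2 < 0) (hz1 : 0 < z1)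
    (hg11 : 0 ≤ g11) (hg22 : 0 ≤ g22) (hg12 : 0 ≤ g12)
    (hpos : 0 < z1 * g22 - z2 * g12)
    (hc10 : 0 < c10) (hc20 : 0 < c20)
    (m M : ℝ)
    (hm : m = z1 / z2 * (1 / c20 + g22) - g12)
    (hM : M = (z1 * g22 - z2 * g12) / (z2 * (1 + g11 * c10) - z1 * g12 * c10)) :
    ∀ c1 c2 : ℝ, 0 < c1 → c1 ≤ c10 → c20 ≤ c2 →
      m * c1 ≤ F z1 z2 g11 g22 g12 c1 c2 ∧
      F z1 z2 g11 g22 g12 c1 c2 ≤ M * c1 ∧ M * c1 < 0 :=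
  stmt1_general z1 z2 g11 g22 g12 c10 c20 hz2 hz1 hg11 hg12 hpos hc20 m M hm hM
end

section
/- Fix reals z1, z2 with z2 < 0 < z1, nonnegative reals g11, g22, g12, and c1⁰, c2⁰ > 0. Set m = (z1/z2)·(1/c2⁰ + g22) − g12 and M = (z1·g22 − z2·g12)/(z2·(1 + g11·c1⁰) − z1·g12·c1⁰). Then there exists a differentiable function c1 : (0, ∞) → ℝ such that c1(c2) > 0 for all c2 > 0, c1(c2⁰) = c1⁰, c1′(c2) = F(c1(c2), c2) for all c2 > 0, c1 is strictly decreasing, and for all c2 ≥ c2⁰ it satisfies the Gronwall bounds c1⁰·exp(m·(c2 − c2⁰)) ≤ c1(c2) ≤ c1⁰·exp(M·(c2 − c2⁰)). -/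
/-!
In the variable `u = log c1` the ODE is separable: it reads `(-z2 + b eᵘ) u' = -(z1 / c2 + q)`
with `b = z1 g12 - z2 g11 ≥ 0` and `q = z1 g22 - z2 g12 ≥ 0`, so trajectories are the level sets
of `-z2 u + b eᵘ + z1 log c2 + q c2`. As `u ↦ -z2 u + b eᵘ` is an increasing bijection of `ℝ`,
every level set is the graph of a function of `c2 > 0`, and it is decreasing because the slope
is negative. For `c2 ≥ c2⁰` the trajectory stays below `c1⁰`, which traps `u'` between `m`
and `M`; the mean value theorem then gives the exponential bounds.
-/

open Real Set Filter

lemma hasDerivAt_mul_add_mul_exp (a b u : ℝ) :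
    HasDerivAt (fun u => a * u + b * exp u) (a + b * exp u) u := by
  simpa using ((hasDerivAt_id u).const_mul a).fun_add ((hasDerivAt_exp u).const_mul b)

section LinearPlusExp

variable {a b : ℝ}

lemma strictMono_mul_add_mul_exp (ha : 0 < a) (hb : 0 ≤ b) :
    StrictMono fun u => a * u + b * exp u :=
  (strictMono_mul_left_of_pos ha).add_monotone (exp_monotone.const_mul hb)

lemma surjective_mul_add_mul_exp (ha : 0 < a) (hb : 0 ≤ b) :
    Function.Surjective fun u => a * u + b * exp u := by
  refine Continuous.surjective (by fun_prop) ?_ ?_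
  · exact (tendsto_id.const_mul_atTop ha).atTop_add_nonneg
      fun u => mul_nonneg hb (exp_pos u).le
  · simpa using (tendsto_id.const_mul_atBot ha).atBot_add
      ((tendsto_exp_atBot).const_mul b)

lemma exists_hasDerivAt_div_mul_add_mul_exp (ha : 0 < a) (hb : 0 ≤ b)
    {G g : ℝ → ℝ} {s : Set ℝ} (hG : ∀ t ∈ s, HasDerivAt G (g t) t) (t₀ u₀ : ℝ) :
    ∃ u : ℝ → ℝ, u t₀ = u₀ ∧ ∀ t ∈ s, HasDerivAt u (g t / (a + b * exp (u t))) t := by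
  let φ : ℝ ≃o ℝ := (strictMono_mul_add_mul_exp ha hb).orderIsoOfSurjective _
    (surjective_mul_add_mul_exp ha hb)
  refine ⟨fun t => φ.symm (G t - G t₀ + φ u₀), by simp, fun t ht => ?_⟩
  have hφsymm : HasDerivAt φ.symm (a + b * exp (φ.symm (G t - G t₀ + φ u₀)))⁻¹
      (G t - G t₀ + φ u₀) :=
    (hasDerivAt_mul_add_mul_exp a b _).of_local_left_inverse φ.symm.continuous.continuousAt
      (by positivity) (Eventually.of_forall φ.apply_symm_apply)
  rw [div_eq_inv_mul]
  exact hφsymm.comp t (((hG t ht).sub_const _).add_const _)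

end LinearPlusExp

lemma mul_sub_le_sub_and_sub_le_mul_sub {f f' : ℝ → ℝ} {x y m M : ℝ}
    (hf : ∀ t ∈ Icc x y, HasDerivAt f (f' t) t) (hf' : ∀ t ∈ Icc x y, f' t ∈ Icc m M)
    (hxy : x ≤ y) :
    m * (y - x) ≤ f y - f x ∧ f y - f x ≤ M * (y - x) := by
  have hcont : ContinuousOn f (Icc x y) := fun t ht => (hf t ht).continuousAt.continuousWithinAt
  have hdiff : DifferentiableOn ℝ f (interior (Icc x y)) := fun t ht =>
    (hf t (interior_subset ht)).differentiableAt.differentiableWithinAt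
  have hderiv : ∀ t ∈ interior (Icc x y), deriv f t ∈ Icc m M := fun t ht => by
    rw [(hf t (interior_subset ht)).deriv]
    exact hf' t (interior_subset ht)
  have hx : x ∈ Icc x y := left_mem_Icc.2 hxy
  have hy : y ∈ Icc x y := right_mem_Icc.2 hxy
  exact ⟨(convex_Icc x y).mul_sub_le_image_sub_of_le_deriv hcont hdiff
      (fun t ht => (hderiv t ht).1) x hx y hy hxy,
    (convex_Icc x y).image_sub_le_mul_sub_of_deriv_le hcont hdiff
      (fun t ht => (hderiv t ht).2) x hx y hy hxy⟩

lemma neg_div_add_div_mem_Icc {a b p q x₀ x y y₀ : ℝ} (ha : 0 < a) (hb : 0 ≤ b) (hp : 0 ≤ p)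
    (hq : 0 ≤ q) (hx₀ : 0 < x₀) (hx : x₀ ≤ x) (hy : 0 ≤ y) (hy₀ : y ≤ y₀) :
    -(p / x + q) / (a + b * y) ∈ Icc (-(p / x₀ + q) / a) (-q / (a + b * y₀)) := by
  have hpx : 0 ≤ p / x := div_nonneg hp (hx₀.trans_le hx).le
  have hpx₀ : p / x ≤ p / x₀ := div_le_div_of_nonneg_left hp hx₀ hx
  have hby : b * y ≤ b * y₀ := mul_le_mul_of_nonneg_left hy₀ hb
  rw [neg_div, neg_div, neg_div]
  constructor
  · exact neg_le_neg (div_le_div₀ (by linarith) (by linarith) ha (by nlinarith))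
  · exact neg_le_neg (div_le_div₀ (by linarith) (by linarith) (by nlinarith) (by linarith))

lemma F_eq_neg_mul_div {z1 z2 g11 g22 g12 x t : ℝ} (hx : x ≠ 0) :
    F z1 z2 g11 g22 g12 x t =
      x * (-(z1 / t + (z1 * g22 - z2 * g12)) / (-z2 + (z1 * g12 - z2 * g11) * x)) := by
  have hden : z2 * (1 / x + g11) - z1 * g12 = -((-z2 + (z1 * g12 - z2 * g11) * x) / x) := by
    field_simp
    ring
  rw [F, hden, div_neg, div_div_eq_mul_div]
  ring

lemma exp_bounds_of_hasDerivAt_neg_div_add_mul_exp {a b p q x₀ y₀ t : ℝ} {u : ℝ → ℝ}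
    (ha : 0 < a) (hb : 0 ≤ b) (hp : 0 ≤ p) (hq : 0 ≤ q) (hx₀ : 0 < x₀)
    (hu : ∀ s ∈ Ici x₀, HasDerivAt u (-(p / s + q) / (a + b * exp (u s))) s)
    (hu_anti : AntitoneOn u (Ici x₀)) (hu₀ : exp (u x₀) = y₀) (ht : x₀ ≤ t) :
    y₀ * exp (-(p / x₀ + q) / a * (t - x₀)) ≤ exp (u t) ∧
      exp (u t) ≤ y₀ * exp (-q / (a + b * y₀) * (t - x₀)) := by
  subst hu₀
  have hslope : ∀ s ∈ Icc x₀ t, -(p / s + q) / (a + b * exp (u s)) ∈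
      Icc (-(p / x₀ + q) / a) (-q / (a + b * exp (u x₀))) :=
    fun s hs => neg_div_add_div_mem_Icc ha hb hp hq hx₀ hs.1 (exp_pos _).le
      (exp_le_exp.2 (hu_anti self_mem_Ici hs.1 hs.1))
  obtain ⟨hlow, hup⟩ := mul_sub_le_sub_and_sub_le_mul_sub (fun s hs => hu s hs.1) hslope ht
  rw [← exp_add, ← exp_add]
  exact ⟨exp_le_exp.2 (by linarith), exp_le_exp.2 (by linarith)⟩

lemma hasDerivAt_neg_mul_log_add_mul (p q : ℝ) {t : ℝ} (ht : t ≠ 0) :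
    HasDerivAt (fun t => -(p * log t + q * t)) (-(p / t + q)) t := by
  have h := (((hasDerivAt_log ht).const_mul p).fun_add ((hasDerivAt_id' t).const_mul q)).fun_neg
  rwa [mul_one, ← div_eq_mul_inv] at h

/-- Existence part of Lemma 2(1) of the paper: through every point `(c10, c20)` of the
positive quadrant there is a solution trajectory, defined for all `c2 > 0`, that remains in
the positive quadrant, is strictly decreasing, and satisfies the Gronwall bounds. -/
theorem stmt2 (z1 z2 g11 g22 g12 c10 c20 : ℝ)
    (hz2 : z2 < 0) (hz1 : 0 < z1)
    (hg11 : 0 ≤ g11) (hg22 : 0 ≤ g22) (hg12 : 0 ≤ g12)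
    (hc10 : 0 < c10) (hc20 : 0 < c20)
    (m M : ℝ)
    (hm : m = z1 / z2 * (1 / c20 + g22) - g12)
    (hM : M = (z1 * g22 - z2 * g12) / (z2 * (1 + g11 * c10) - z1 * g12 * c10)) :
    ∃ c1 : ℝ → ℝ,
      (∀ c2 : ℝ, 0 < c2 → 0 < c1 c2) ∧
      c1 c20 = c10 ∧
      (∀ c2 : ℝ, 0 < c2 → HasDerivAt c1 (F z1 z2 g11 g22 g12 (c1 c2) c2) c2) ∧
      StrictAntiOn c1 (Set.Ioi (0 : ℝ)) ∧
      (∀ c2 : ℝ, c20 ≤ c2 →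
        c10 * Real.exp (m * (c2 - c20)) ≤ c1 c2 ∧
        c1 c2 ≤ c10 * Real.exp (M * (c2 - c20))) := by
  set b := z1 * g12 - z2 * g11
  set q := z1 * g22 - z2 * g12 with hq_def
  have hb : 0 ≤ b := by nlinarith
  have hq : 0 ≤ q := by nlinarith
  obtain ⟨u, hu₀, hu⟩ := exists_hasDerivAt_div_mul_add_mul_exp (neg_pos.2 hz2) hb
    (fun t ht => hasDerivAt_neg_mul_log_add_mul z1 q (ne_of_gt ht)) c20 (log c10)
  have hu_anti : StrictAntiOn u (Ioi 0) :=
    strictAntiOn_of_hasDerivWithinAt_neg (convex_Ioi 0)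
      (fun t ht => (hu t ht).continuousAt.continuousWithinAt)
      (fun t ht => (hu t (interior_subset ht)).hasDerivWithinAt)
      (fun t ht => div_neg_of_neg_of_pos
        (neg_neg_of_pos (add_pos_of_pos_of_nonneg (div_pos hz1 (interior_subset ht)) hq))
        (add_pos_of_pos_of_nonneg (neg_pos.2 hz2) (mul_nonneg hb (exp_pos _).le)))
  have hexp_u₀ : exp (u c20) = c10 := by rw [hu₀, exp_log hc10]
  have hm' : m = -(z1 / c20 + q) / -z2 := by
    rw [hm, hq_def]
    field_simp [hz2.ne]
    ring
  have hM' : M = -q / (-z2 + b * c10) := by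
    rw [hM, ← neg_div_neg_eq]
    ring
  refine ⟨fun t => exp (u t), fun _ _ => exp_pos _, hexp_u₀, fun t ht => ?_,
    exp_strictMono.comp_strictAntiOn hu_anti, fun t ht => ?_⟩
  · rw [F_eq_neg_mul_div (exp_pos _).ne']
    exact (hasDerivAt_exp _).comp t (hu t ht)
  · rw [hm', hM']
    exact exp_bounds_of_hasDerivAt_neg_div_add_mul_exp (neg_pos.2 hz2) hb hz1.le hq hc20
      (fun s hs => hu s (hc20.trans_le hs)) (hu_anti.antitoneOn.mono (Ici_subset_Ioi.2 hc20))
      hexp_u₀ ht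
end

section
/- Fix reals z1, z2 with z2 < 0 < z1 and nonnegative reals g11, g22, g12 with g12 > 0. Then every solution trajectory c1 satisfies c1(c2) → 0 as c2 → ∞ and c1(c2) → +∞ as c2 → 0⁺. -/
open Filter Topology Set

/-- Quotient bound: if `A ≤ num` with `A > 0` and `0 < -den ≤ B` then `num / den ≤ -(A / B)`. -/
lemma div_le_neg_div (num den A B : ℝ) (hA : 0 < A) (hAnum : A ≤ num)
    (hden : 0 < -den) (hB : -den ≤ B) : num / den ≤ -(A / B) := by
  have h1 : A / B ≤ num / (-den) :=
    div_le_div₀ (le_trans hA.le hAnum) hAnum hden hB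
  have h2 : num / den = -(num / (-den)) := by
    rw [div_neg, neg_neg]
  linarith

/-- Limits established in the proof of Lemma 2(2) of the paper: every solution trajectory
tends to `0` as `c2 → ∞` and to `+∞` as `c2 → 0⁺`. -/
theorem stmt4 (z1 z2 g11 g22 g12 : ℝ)
    (hz2 : z2 < 0) (hz1 : 0 < z1)
    (hg11 : 0 ≤ g11) (hg22 : 0 ≤ g22) (hg12 : 0 < g12)
    (c1 : ℝ → ℝ)
    (h_pos : ∀ c2 : ℝ, 0 < c2 → 0 < c1 c2)
    (h_ode : ∀ c2 : ℝ, 0 < c2 → HasDerivAt c1 (F z1 z2 g11 g22 g12 (c1 c2) c2) c2) :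
    Tendsto c1 atTop (𝓝 0) ∧ Tendsto c1 (𝓝[>] (0 : ℝ)) atTop := by
  have hz2' : (0:ℝ) < -z2 := by linarith
  -- numerator is positive and bounded below
  have hnum : ∀ t > (0:ℝ), 0 < z1 * (1 / t + g22) - z2 * g12 := by
    intro t ht
    have h1 : 0 < 1 / t := one_div_pos.mpr ht
    nlinarith [mul_pos hz2' hg12]
  -- denominator is negative
  have hden : ∀ t > (0:ℝ), z2 * (1 / c1 t + g11) - z1 * g12 < 0 := by
    intro t ht
    have h1 : 0 < 1 / c1 t := one_div_pos.mpr (h_pos t ht)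
    nlinarith [mul_pos hz1 hg12]
  -- continuity
  have hcont : ∀ t > (0:ℝ), ContinuousAt c1 t := fun t ht => (h_ode t ht).continuousAt
  -- strict antitonicity
  have hanti : StrictAntiOn c1 (Ioi 0) := by
    apply strictAntiOn_of_deriv_neg (convex_Ioi 0)
    · exact fun t ht => (hcont t ht).continuousWithinAt
    · rw [interior_Ioi]
      intro t ht
      rw [(h_ode t ht).deriv]
      exact div_neg_of_pos_of_neg (hnum t ht) (hden t ht)
  constructor
  · -- Part 1: c1 → 0 at +∞
    -- First: for every ε > 0 there is a > 0 with c1 a < ε.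
    have key : ∀ ε > (0:ℝ), ∃ a > (0:ℝ), c1 a < ε := by
      intro ε hε
      by_contra hcon
      push_neg at hcon
      set D := -z2 * (1 / ε + g11) + z1 * g12 with hDdef
      have hD : 0 < D := by
        rw [hDdef]
        have h1 : 0 < 1 / ε + g11 := by positivity
        nlinarith [mul_pos hz1 hg12, mul_pos hz2' h1]
      set δ := (-z2 * g12) / D with hδdef
      have hδ : 0 < δ := div_pos (mul_pos hz2' hg12) hD
      -- g(t) = c1 t + δ t is antitone on [1, ∞)
      have hmono : AntitoneOn (fun t => c1 t + δ * t) (Ici 1) := by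
        have haux : ∀ t ∈ interior (Ici (1:ℝ)),
            HasDerivAt (fun t => c1 t + δ * t)
              (F z1 z2 g11 g22 g12 (c1 t) t + δ * 1) t := by
          rw [interior_Ici]
          intro t ht
          have ht0 : (0:ℝ) < t := lt_trans one_pos ht
          exact (h_ode t ht0).add ((hasDerivAt_id t).const_mul δ)
        apply antitoneOn_of_deriv_nonpos (convex_Ici 1)
        · intro t ht
          have ht0 : (0:ℝ) < t := lt_of_lt_of_le one_pos ht
          exact ((hcont t ht0).add ((continuous_const.mul continuous_id).continuousAt)).continuousWithinAt
        · exact fun t ht => (haux t ht).differentiableAt.differentiableWithinAt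
        · intro t ht
          rw [(haux t ht).deriv]
          rw [interior_Ici] at ht
          have ht0 : (0:ℝ) < t := lt_trans one_pos ht
          have hεc : ε ≤ c1 t := hcon t ht0
          have hFle : F z1 z2 g11 g22 g12 (c1 t) t ≤ -((-z2 * g12) / D) := by
            apply div_le_neg_div _ _ _ _ (mul_pos hz2' hg12)
            · have h1 : 0 ≤ z1 * (1 / t + g22) := by positivity
              nlinarith
            · linarith [hden t ht0]
            · have h1 : 1 / c1 t ≤ 1 / ε := one_div_le_one_div_of_le hε hεc
              rw [hDdef]
              nlinarith
          simp only [hδdef]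
          linarith
      -- contradiction at large t
      obtain ⟨T, hT1, hδT⟩ : ∃ T, 1 < T ∧ δ * T = c1 1 + δ + δ := by
        refine ⟨(c1 1 + δ + δ) / δ, ?_, by field_simp⟩
        rw [one_lt_div hδ]
        linarith [h_pos 1 one_pos]
      have hmle := hmono (self_mem_Ici) (mem_Ici.mpr hT1.le) hT1.le
      simp only at hmle
      have hcT : 0 < c1 T := h_pos T (by linarith)
      linarith
    -- conclude via metric characterization
    rw [Metric.tendsto_atTop]
    intro ε hε
    obtain ⟨a, ha, haε⟩ := key ε hε
    refine ⟨a + 1, fun n hn => ?_⟩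
    have han : a < n := by linarith
    have hn0 : 0 < n := lt_trans ha han
    have h1 : c1 n < c1 a := hanti (mem_Ioi.mpr ha) (mem_Ioi.mpr hn0) han
    have h2 : 0 < c1 n := h_pos n hn0
    rw [Real.dist_eq, sub_zero, abs_of_pos h2]
    linarith
  · -- Part 2: c1 → +∞ as c2 → 0⁺
    set m := c1 1 with hmdef
    have hm : 0 < m := h_pos 1 one_pos
    set K := -z2 * (1 / m + g11) + z1 * g12 with hKdef
    have hK : 0 < K := by
      rw [hKdef]
      have h1 : 0 < 1 / m + g11 := by positivity
      nlinarith [mul_pos hz1 hg12, mul_pos hz2' h1]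
    -- on (0,1], c1 t ≥ m - (z1/K) log t
    have hbound : ∀ t ∈ Ioc (0:ℝ) 1, m - (z1 / K) * Real.log t ≤ c1 t := by
      have haux : ∀ t ∈ interior (Ioc (0:ℝ) 1),
          HasDerivAt (fun t => c1 t + (z1 / K) * Real.log t)
            (F z1 z2 g11 g22 g12 (c1 t) t + (z1 / K) * t⁻¹) t := by
        rw [interior_Ioc]
        intro t ht
        exact (h_ode t ht.1).add ((Real.hasDerivAt_log ht.1.ne').const_mul (z1 / K))
      have hmono : AntitoneOn (fun t => c1 t + (z1 / K) * Real.log t) (Ioc 0 1) := by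
        apply antitoneOn_of_deriv_nonpos (convex_Ioc 0 1)
        · intro t ht
          exact ((hcont t ht.1).add
            (continuousAt_const.mul (Real.continuousAt_log ht.1.ne'))).continuousWithinAt
        · exact fun t ht => (haux t ht).differentiableAt.differentiableWithinAt
        · intro t ht
          rw [(haux t ht).deriv]
          rw [interior_Ioc] at ht
          have ht0 := ht.1
          have hmc : m < c1 t := hanti (mem_Ioi.mpr ht0) (mem_Ioi.mpr one_pos) ht.2
          have hFle : F z1 z2 g11 g22 g12 (c1 t) t ≤ -((z1 * (1 / t)) / K) := by
            apply div_le_neg_div _ _ _ _ (mul_pos hz1 (one_div_pos.mpr ht0))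
            · nlinarith [mul_pos hz2' hg12, mul_nonneg hz1.le hg22]
            · linarith [hden t ht0]
            · have h1 : 1 / c1 t ≤ 1 / m := one_div_le_one_div_of_le hm hmc.le
              rw [hKdef]
              nlinarith
          have heq : (z1 / K) * t⁻¹ = (z1 * (1 / t)) / K := by
            rw [one_div]; ring
          linarith [heq ▸ hFle]
      intro t ht
      have h1 : (1:ℝ) ∈ Ioc (0:ℝ) 1 := ⟨one_pos, le_refl 1⟩
      have := hmono ht h1 ht.2
      simp only [Real.log_one, mul_zero, add_zero] at this
      linarith
    -- lower bound tends to +∞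
    have hlb : Tendsto (fun t => m - (z1 / K) * Real.log t) (𝓝[>] (0:ℝ)) atTop := by
      have h1 : Tendsto (fun t => (z1 / K) * Real.log t) (𝓝[>] (0:ℝ)) atBot :=
        Real.tendsto_log_nhdsGT_zero.const_mul_atBot (div_pos hz1 hK)
      have h2 : Tendsto (fun t => -((z1 / K) * Real.log t)) (𝓝[>] (0:ℝ)) atTop :=
        tendsto_neg_atBot_atTop.comp h1
      simpa [sub_eq_add_neg] using tendsto_atTop_add_const_left (𝓝[>] (0:ℝ)) m h2
    apply tendsto_atTop_mono' (𝓝[>] (0:ℝ)) _ hlb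
    filter_upwards [Ioc_mem_nhdsGT_of_mem (⟨le_refl 0, one_pos⟩ : (0:ℝ) ∈ Ico (0:ℝ) 1)] with t ht
    exact hbound t ht
end

section
/- Fix reals z1, z2 with z2 < 0 < z1, nonnegative reals g11, g22, g12 with g12 > 0, and bulk concentrations c̄1, c̄2 > 0. Then for every solution trajectory c1 there exists exactly one c2* > 0 such that z1·c1(c2*) + z2·c2* = z1·c̄1 + z2·c̄2 (i.e., c1(c2*) = c̄1 − (z2/z1)·(c2* − c̄2)). -/
open Set Filter Topology

theorem existsUnique_eq_of_strictAntiOn_Ioi {α δ : Type*} [ConditionallyCompleteLinearOrder α]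
    [TopologicalSpace α] [OrderTopology α] [DenselyOrdered α] [NoMaxOrder α]
    [LinearOrder δ] [TopologicalSpace δ] [OrderClosedTopology δ]
    {φ : α → δ} {a : α} (hcont : ContinuousOn φ (Ioi a)) (hanti : StrictAntiOn φ (Ioi a))
    (hleft : Tendsto φ (𝓝[>] a) atTop) (hright : Tendsto φ atTop atBot) (K : δ) :
    ∃! x, a < x ∧ φ x = K := by
  obtain ⟨x, hx, hxK⟩ := hcont.surjOn_of_tendsto' nonempty_Ioi
    ((tendsto_comp_coe_Ioi_atBot (a := a)).2 hleft) (tendsto_comp_val_Ioi_atTop.mpr hright) (mem_univ K)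
  exact ⟨x, ⟨hx, hxK⟩, fun y hy => hanti.injOn hy.1 hx (hy.2.trans hxK.symm)⟩

theorem tendsto_nhdsGT_zero_atTop_of_deriv_le_neg_div {f f' : ℝ → ℝ} {a : ℝ} (ha : 0 < a)
    (hf : ∀ x ∈ Ioc (0 : ℝ) 1, HasDerivAt f (f' x) x) (hf' : ∀ x ∈ Ioo (0 : ℝ) 1, f' x ≤ -a / x) :
    Tendsto f (𝓝[>] 0) atTop := by
  have hg : ∀ x ∈ Ioc (0 : ℝ) 1, HasDerivAt (fun x => f x + a * Real.log x) (f' x + a * x⁻¹) x :=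
    fun x hx => (hf x hx).add ((Real.hasDerivAt_log hx.1.ne').const_mul a)
  have hanti : AntitoneOn (fun x => f x + a * Real.log x) (Ioc 0 1) := by
    refine antitoneOn_of_deriv_nonpos (convex_Ioc 0 1)
      (fun x hx => (hg x hx).continuousAt.continuousWithinAt) ?_ ?_ <;> rw [interior_Ioc]
    · exact fun x hx => (hg x (Ioo_subset_Ioc_self hx)).differentiableAt.differentiableWithinAt
    · intro x hx
      rw [(hg x (Ioo_subset_Ioc_self hx)).deriv, ← div_eq_mul_inv]
      linarith [hf' x hx, neg_div x a]
  have hlower : ∀ x ∈ Ioc (0 : ℝ) 1, f 1 + -a * Real.log x ≤ f x := fun x hx => by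
    have := hanti hx ⟨one_pos, le_rfl⟩ hx.2
    simp only [Real.log_one, mul_zero, add_zero] at this
    linarith
  refine tendsto_atTop_mono' _ (eventually_of_mem (Ioc_mem_nhdsGT one_pos) hlower) ?_
  exact tendsto_atTop_add_const_left _ _
    (Real.tendsto_log_nhdsGT_zero.const_mul_atBot_of_neg (neg_neg_of_pos ha))

section FBounds

variable {z1 z2 g11 g22 g12 c1 c2 : ℝ}

theorem F_neg (hz2 : z2 < 0) (hz1 : 0 < z1) (hg11 : 0 ≤ g11) (hg22 : 0 ≤ g22) (hg12 : 0 ≤ g12)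
    (hc1 : 0 < c1) (hc2 : 0 < c2) : F z1 z2 g11 g22 g12 c1 c2 < 0 := by
  have := one_div_pos.mpr hc1
  have := one_div_pos.mpr hc2
  exact div_neg_of_pos_of_neg (by nlinarith) (by nlinarith)

theorem F_le_neg_div {m : ℝ} (hz2 : z2 < 0) (hz1 : 0 < z1) (hg11 : 0 ≤ g11) (hg22 : 0 ≤ g22)
    (hg12 : 0 ≤ g12) (hm : 0 < m) (hmc1 : m ≤ c1) (hc2 : 0 < c2) :
    F z1 z2 g11 g22 g12 c1 c2 ≤ -(z1 / (z1 * g12 - z2 * (1 / m + g11))) / c2 := by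
  have hinv : 1 / c1 ≤ 1 / m := one_div_le_one_div_of_le hm hmc1
  have := one_div_pos.mpr (hm.trans_le hmc1)
  have := one_div_pos.mpr hc2
  have hden_pos : 0 < z1 * g12 - z2 * (1 / c1 + g11) := by nlinarith
  have hden_le : z1 * g12 - z2 * (1 / c1 + g11) ≤ z1 * g12 - z2 * (1 / m + g11) := by nlinarith
  have hnum : z1 / c2 ≤ z1 * (1 / c2 + g22) - z2 * g12 := by
    rw [div_eq_mul_one_div]; nlinarith
  have key : z1 / c2 / (z1 * g12 - z2 * (1 / m + g11)) ≤
      (z1 * (1 / c2 + g22) - z2 * g12) / (z1 * g12 - z2 * (1 / c1 + g11)) :=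
    div_le_div₀ ((div_pos hz1 hc2).le.trans hnum) hnum hden_pos hden_le
  rw [F, ← neg_sub (z1 * g12), div_neg]
  linarith [show -(z1 / (z1 * g12 - z2 * (1 / m + g11))) / c2 =
    -(z1 / c2 / (z1 * g12 - z2 * (1 / m + g11))) by ring]

end FBounds

section Trajectory

variable {z1 z2 g11 g22 g12 : ℝ} {c1 : ℝ → ℝ}

theorem trajectory_strictAntiOn (hz2 : z2 < 0) (hz1 : 0 < z1) (hg11 : 0 ≤ g11)
    (hg22 : 0 ≤ g22) (hg12 : 0 ≤ g12) (h_pos : ∀ c2 : ℝ, 0 < c2 → 0 < c1 c2)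
    (h_ode : ∀ c2 : ℝ, 0 < c2 → HasDerivAt c1 (F z1 z2 g11 g22 g12 (c1 c2) c2) c2) :
    StrictAntiOn c1 (Ioi 0) := by
  refine strictAntiOn_of_deriv_neg (convex_Ioi 0)
    (fun x hx => (h_ode x hx).continuousAt.continuousWithinAt) fun x hx => ?_
  rw [interior_Ioi] at hx
  rw [(h_ode x hx).deriv]
  exact F_neg hz2 hz1 hg11 hg22 hg12 (h_pos x hx) hx

theorem tendsto_trajectory_nhdsGT_zero (hz2 : z2 < 0) (hz1 : 0 < z1) (hg11 : 0 ≤ g11)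
    (hg22 : 0 ≤ g22) (hg12 : 0 ≤ g12) (h_pos : ∀ c2 : ℝ, 0 < c2 → 0 < c1 c2)
    (h_ode : ∀ c2 : ℝ, 0 < c2 → HasDerivAt c1 (F z1 z2 g11 g22 g12 (c1 c2) c2) c2) :
    Tendsto c1 (𝓝[>] 0) atTop := by
  have hm := h_pos 1 one_pos
  have hB : 0 < z1 * g12 - z2 * (1 / c1 1 + g11) := by
    have := one_div_pos.mpr hm
    nlinarith
  refine tendsto_nhdsGT_zero_atTop_of_deriv_le_neg_div (div_pos hz1 hB)
    (fun x hx => h_ode x hx.1) fun x hx => ?_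
  have hc1x : c1 1 ≤ c1 x :=
    (trajectory_strictAntiOn hz2 hz1 hg11 hg22 hg12 h_pos h_ode).antitoneOn
      hx.1 (mem_Ioi.mpr one_pos) hx.2.le
  exact F_le_neg_div hz2 hz1 hg11 hg22 hg12 hm hc1x hx.1

end Trajectory

theorem stmt5_general (z1 z2 g11 g22 g12 cbar1 cbar2 : ℝ)
    (hz2 : z2 < 0) (hz1 : 0 < z1)
    (hg11 : 0 ≤ g11) (hg22 : 0 ≤ g22) (hg12 : 0 < g12)
    (c1 : ℝ → ℝ)
    (h_pos : ∀ c2 : ℝ, 0 < c2 → 0 < c1 c2)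
    (h_ode : ∀ c2 : ℝ, 0 < c2 → HasDerivAt c1 (F z1 z2 g11 g22 g12 (c1 c2) c2) c2) :
    ∃! c2star : ℝ, 0 < c2star ∧
      z1 * c1 c2star + z2 * c2star = z1 * cbar1 + z2 * cbar2 := by
  have hanti := trajectory_strictAntiOn hz2 hz1 hg11 hg22 hg12.le h_pos h_ode
  refine existsUnique_eq_of_strictAntiOn_Ioi (φ := fun x => z1 * c1 x + z2 * x) ?_ ?_ ?_ ?_ _
  · exact fun x hx => ((h_ode x hx).continuousAt.const_mul z1).add
      (continuousAt_id.const_mul z2) |>.continuousWithinAt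
  · exact fun x hx y hy hxy => by nlinarith [hanti hx hy hxy]
  · refine ((tendsto_trajectory_nhdsGT_zero hz2 hz1 hg11 hg22 hg12.le h_pos h_ode).const_mul_atTop
      hz1).atTop_add (C := z2 * 0) ?_
    exact ((continuous_const_mul z2).tendsto 0).mono_left nhdsWithin_le_nhds
  · refine tendsto_atBot_mono' _ (eventually_ge_atTop 1 |>.mono fun x hx => ?_)
      (tendsto_atBot_add_const_left _ (z1 * c1 1) (tendsto_id.const_mul_atTop_of_neg hz2))
    have := hanti.antitoneOn (mem_Ioi.mpr one_pos) (mem_Ioi.mpr (one_pos.trans_le hx)) hx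
    dsimp only [id]
    nlinarith

/-- Lemma 2(2) of the paper: every solution trajectory intersects the local
electroneutrality line `{E_x = 0}`, i.e. `z1·c1 + z2·c2 = z1·c̄1 + z2·c̄2`, at exactly one
point. -/
theorem stmt5 (z1 z2 g11 g22 g12 cbar1 cbar2 : ℝ)
    (hz2 : z2 < 0) (hz1 : 0 < z1)
    (hg11 : 0 ≤ g11) (hg22 : 0 ≤ g22) (hg12 : 0 < g12)
    (hcbar1 : 0 < cbar1) (hcbar2 : 0 < cbar2)
    (c1 : ℝ → ℝ)
    (h_pos : ∀ c2 : ℝ, 0 < c2 → 0 < c1 c2)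
    (h_ode : ∀ c2 : ℝ, 0 < c2 → HasDerivAt c1 (F z1 z2 g11 g22 g12 (c1 c2) c2) c2) :
    ∃! c2star : ℝ, 0 < c2star ∧
      z1 * c1 c2star + z2 * c2star = z1 * cbar1 + z2 * cbar2 :=
  stmt5_general z1 z2 g11 g22 g12 cbar1 cbar2 hz2 hz1 hg11 hg22 hg12 c1 h_pos h_ode
end

section
/- Fix reals z1, z2 with z2 < 0 < z1, nonnegative reals g11, g22, g12, and c1⁰, c2⁰ > 0 with D(c1⁰, c2⁰) < 0. Let c1 be a solution trajectory with c1(c2⁰) = c1⁰. Then there exist c2ᵃ ∈ (0, c2⁰) and c2ᵇ ∈ (c2⁰, ∞) such that D(c1(c2ᵃ), c2ᵃ) = 0 and D(c1(c2ᵇ), c2ᵇ) = 0. -/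
/-- The determinant of the Hessian of the entropy-plus-steric energy density. -/
noncomputable def D (g11 g22 g12 c1 c2 : ℝ) : ℝ :=
  (1 / c1 + g11) * (1 / c2 + g22) - g12 ^ 2

/-!
With `a = 1/c1 + g11` and `b = 1/c2 + g22` we have `F = -N/K`, where `N = z1 b - z2 g12 ≥ -z2 g12`
and `K = -z2 a + z1 g12 ≥ z1 g12`. Where `D < 0`, i.e. `a b < g12²`, also `a < g12² c2`, so
`K ≤ g12 (z1 - z2 g12 c2)`.

If `D` stayed negative on `(0, c2⁰]`, then `c1 c2 > 1/(g12² c2)` there; but integrating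
`F ≥ -N/(z1 g12)` shows that `c1` grows only like `log (1/c2)/g12` as `c2 → 0`.
If `D` stayed negative on `[c2⁰, ∞)`, integrating `F ≤ z2/(z1 - z2 g12 c2)` gives
`c1 c2 ≤ c1⁰ - (log (z1 - z2 g12 c2) - log (z1 - z2 g12 c2⁰))/g12 → -∞`, contradicting `c1 > 0`.
So `D` changes sign on both sides of `c2⁰`, and the intermediate value theorem gives the zeros.
-/
open Filter Topology Set Real

lemma IsPreconnected.forall_neg_of_ne_zero {X : Type*} [TopologicalSpace X] {S : Set X}
    {f : X → ℝ} (hS : IsPreconnected S) (hf : ContinuousOn f S) {x₀ : X} (hx₀ : x₀ ∈ S)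
    (hneg : f x₀ < 0) (hne : ∀ x ∈ S, f x ≠ 0) : ∀ x ∈ S, f x < 0 := by
  intro x hx
  by_contra! hpos
  obtain ⟨y, hy, hy0⟩ := hS.intermediate_value hx₀ hx hf ⟨hneg.le, hpos⟩
  exact hne y hy hy0

lemma sub_le_sub_of_hasDerivAt_le {f g f' g' : ℝ → ℝ} {a b : ℝ} (hab : a ≤ b)
    (hf : ∀ x ∈ Icc a b, HasDerivAt f (f' x) x) (hg : ∀ x ∈ Icc a b, HasDerivAt g (g' x) x)
    (hle : ∀ x ∈ Ioo a b, f' x ≤ g' x) : f b - f a ≤ g b - g a := by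
  have hmono : MonotoneOn (fun x => g x - f x) (Icc a b) := by
    refine monotoneOn_of_hasDerivWithinAt_nonneg (f' := fun x => g' x - f' x) (convex_Icc a b)
      (fun x hx => ((hg x hx).sub (hf x hx)).continuousAt.continuousWithinAt) (fun x hx => ?_)
      (fun x hx => ?_) <;> rw [interior_Icc] at hx
    · exact ((hg x (Ioo_subset_Icc_self hx)).sub (hf x (Ioo_subset_Icc_self hx))).hasDerivWithinAt
    · exact sub_nonneg.2 (hle x hx)
  have := hmono (left_mem_Icc.2 hab) (right_mem_Icc.2 hab) hab
  linarith

lemma tendsto_mul_sub_log_div (K a b : ℝ) :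
    Tendsto (fun s => s * (K - (log s / a + s * b))) (𝓝 0) (𝓝 0) := by
  have hcont : Continuous (fun s => K * s - s * log s / a - b * s ^ 2) := by
    have := continuous_mul_log
    fun_prop
  convert hcont.tendsto 0 using 2 with s
  · ring
  · simp

section

variable {z1 z2 g11 g22 g12 : ℝ}

lemma one_div_add_lt_of_D_neg (hg11 : 0 ≤ g11) (hg22 : 0 ≤ g22) {c1 c2 : ℝ} (hc1 : 0 < c1)
    (hc2 : 0 < c2) (hD : D g11 g22 g12 c1 c2 < 0) : 1 / c1 + g11 < g12 ^ 2 * c2 := by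
  have ha : 0 < 1 / c1 + g11 := by positivity
  have hb : 1 ≤ (1 / c2 + g22) * c2 := by
    rw [add_mul, one_div_mul_cancel hc2.ne']
    nlinarith
  rw [D, sub_neg] at hD
  calc 1 / c1 + g11 ≤ (1 / c1 + g11) * ((1 / c2 + g22) * c2) := le_mul_of_one_le_right ha.le hb
    _ = (1 / c1 + g11) * (1 / c2 + g22) * c2 := by ring
    _ < g12 ^ 2 * c2 := by gcongr

lemma neg_le_F (hz1 : 0 < z1) (hz2 : z2 < 0) (hg11 : 0 ≤ g11) (hg22 : 0 ≤ g22) (hg12 : 0 < g12)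
    {c1 c2 : ℝ} (hc1 : 0 < c1) (hc2 : 0 < c2) :
    -(c2⁻¹ / g12 + (g22 / g12 - z2 / z1)) ≤ F z1 z2 g11 g22 g12 c1 c2 := by
  have hN : 0 ≤ z1 * (1 / c2 + g22) - z2 * g12 := by
    have : 0 < 1 / c2 + g22 := by positivity
    nlinarith
  have hden : z2 * (1 / c1 + g11) - z1 * g12 ≤ -(z1 * g12) := by
    have : 0 < 1 / c1 + g11 := by positivity
    nlinarith
  have hbound : -(c2⁻¹ / g12 + (g22 / g12 - z2 / z1)) * (z2 * (1 / c1 + g11) - z1 * g12) =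
      (z1 * (1 / c2 + g22) - z2 * g12) * -(z2 * (1 / c1 + g11) - z1 * g12) / (z1 * g12) := by
    field_simp
    ring
  rw [F, le_div_iff_of_neg (by nlinarith), hbound, le_div_iff₀ (by positivity)]
  nlinarith

lemma F_le_of_D_neg (hz1 : 0 < z1) (hz2 : z2 < 0) (hg11 : 0 ≤ g11) (hg22 : 0 ≤ g22)
    (hg12 : 0 < g12) {c1 c2 : ℝ} (hc1 : 0 < c1) (hc2 : 0 < c2) (hD : D g11 g22 g12 c1 c2 < 0) :
    F z1 z2 g11 g22 g12 c1 c2 ≤ z2 / (z1 - z2 * g12 * c2) := by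
  have ha := one_div_add_lt_of_D_neg hg11 hg22 hc1 hc2 hD
  have hN : -z2 * g12 ≤ z1 * (1 / c2 + g22) - z2 * g12 := by
    have : 0 < 1 / c2 + g22 := by positivity
    nlinarith
  have hK : 0 < -(z2 * (1 / c1 + g11) - z1 * g12) := by
    have : 0 < 1 / c1 + g11 := by positivity
    nlinarith
  have hden : -(z2 * (1 / c1 + g11) - z1 * g12) ≤ g12 * (z1 - z2 * g12 * c2) := by
    nlinarith
  have hP : 0 < z1 - z2 * g12 * c2 := by nlinarith [mul_pos hg12 hc2]
  rw [F, ← neg_div_neg_eq, div_le_div_iff₀ hK hP]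
  nlinarith [mul_le_mul_of_nonneg_left hden (neg_nonneg.2 hz2.le)]

def IsSolutionTrajectory (z1 z2 g11 g22 g12 : ℝ) (c1 : ℝ → ℝ) : Prop :=
  ∀ t, 0 < t → 0 < c1 t ∧ HasDerivAt c1 (F z1 z2 g11 g22 g12 (c1 t) t) t

namespace IsSolutionTrajectory

variable {c1 : ℝ → ℝ}

lemma continuousOn_D (hc1 : IsSolutionTrajectory z1 z2 g11 g22 g12 c1) :
    ContinuousOn (fun t => D g11 g22 g12 (c1 t) t) (Ioi 0) := by
  intro t ht
  have hc : ContinuousAt c1 t := (hc1 t ht).2.continuousAt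
  exact (((continuousAt_const.div hc (hc1 t ht).1.ne').add continuousAt_const).mul
    ((continuousAt_const.div continuousAt_id (ne_of_gt ht)).add continuousAt_const)).sub
    continuousAt_const |>.continuousWithinAt

lemma le_add_log_sub_log (hc1 : IsSolutionTrajectory z1 z2 g11 g22 g12 c1) (hz1 : 0 < z1)
    (hz2 : z2 < 0) (hg11 : 0 ≤ g11) (hg22 : 0 ≤ g22) (hg12 : 0 < g12) {s t : ℝ} (hs : 0 < s)
    (hst : s ≤ t) :
    c1 s ≤ c1 t + (log t / g12 + t * (g22 / g12 - z2 / z1)) -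
      (log s / g12 + s * (g22 / g12 - z2 / z1)) := by
  have hcmp := sub_le_sub_of_hasDerivAt_le hst
    (f := fun u => -(log u / g12 + u * (g22 / g12 - z2 / z1))) (g := c1)
    (fun u hu => (((hasDerivAt_log (hs.trans_le hu.1).ne').div_const g12).add
      (hasDerivAt_mul_const _)).neg)
    (fun u hu => (hc1 u (hs.trans_le hu.1)).2)
    (fun u hu => neg_le_F hz1 hz2 hg11 hg22 hg12 (hc1 u (hs.trans hu.1)).1 (hs.trans hu.1))
  linarith

lemma le_sub_log_sub_log_of_D_neg (hc1 : IsSolutionTrajectory z1 z2 g11 g22 g12 c1)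
    (hz1 : 0 < z1) (hz2 : z2 < 0) (hg11 : 0 ≤ g11) (hg22 : 0 ≤ g22) (hg12 : 0 < g12)
    {t₀ T : ℝ} (ht₀ : 0 < t₀) (hT : t₀ ≤ T) (hD : ∀ t ∈ Ioo t₀ T, D g11 g22 g12 (c1 t) t < 0) :
    c1 T ≤ c1 t₀ - (log (z1 - z2 * g12 * T) - log (z1 - z2 * g12 * t₀)) / g12 := by
  have hP : ∀ u, 0 < u → 0 < z1 - z2 * g12 * u := fun u hu => by nlinarith [mul_pos hg12 hu]
  have hcmp := sub_le_sub_of_hasDerivAt_le hT (f := c1)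
    (g := fun u => -(log (z1 - z2 * g12 * u) / g12))
    (fun u hu => (hc1 u (ht₀.trans_le hu.1)).2)
    (fun u hu => ((((hasDerivAt_id' u).const_mul (z2 * g12)).const_sub z1).log
      (hP u (ht₀.trans_le hu.1)).ne').div_const g12 |>.neg)
    (fun u hu => by
      have hu0 := ht₀.trans hu.1
      convert F_le_of_D_neg hz1 hz2 hg11 hg22 hg12 (hc1 u hu0).1 hu0 (hD u hu) using 1
      field_simp [(hP u hu0).ne'])
  rw [sub_div]
  linarith

lemma exists_D_eq_zero_of_lt (hc1 : IsSolutionTrajectory z1 z2 g11 g22 g12 c1) (hz1 : 0 < z1)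
    (hz2 : z2 < 0) (hg11 : 0 ≤ g11) (hg22 : 0 ≤ g22) (hg12 : 0 < g12) {t₀ : ℝ} (ht₀ : 0 < t₀)
    (hD : D g11 g22 g12 (c1 t₀) t₀ < 0) : ∃ s ∈ Ioo 0 t₀, D g11 g22 g12 (c1 s) s = 0 := by
  by_contra! hne
  have hneg : ∀ s ∈ Ioc 0 t₀, D g11 g22 g12 (c1 s) s < 0 :=
    isPreconnected_Ioc.forall_neg_of_ne_zero (hc1.continuousOn_D.mono Ioc_subset_Ioi_self)
      ⟨ht₀, le_rfl⟩ hD fun s hs =>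
        hs.2.eq_or_lt.elim (fun h => h ▸ hD.ne) fun h => hne s ⟨hs.1, h⟩
  set B := g22 / g12 - z2 / z1
  set K := c1 t₀ + (log t₀ / g12 + t₀ * B)
  have hsmall : ∀ᶠ s in 𝓝[>] 0, s * (K - (log s / g12 + s * B)) < 1 / g12 ^ 2 :=
    ((tendsto_mul_sub_log_div K g12 B).mono_left nhdsWithin_le_nhds).eventually
      (gt_mem_nhds (by positivity))
  obtain ⟨s, hlt, hs⟩ := (hsmall.and (Ioo_mem_nhdsGT ht₀)).exists
  have hc1s := (hc1 s hs.1).1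
  have hupper : c1 s ≤ K - (log s / g12 + s * B) :=
    hc1.le_add_log_sub_log hz1 hz2 hg11 hg22 hg12 hs.1 hs.2.le
  have hlower : 1 / c1 s < g12 ^ 2 * s := by
    linarith [one_div_add_lt_of_D_neg hg11 hg22 hc1s hs.1 (hneg s ⟨hs.1, hs.2.le⟩)]
  rw [div_lt_iff₀ hc1s] at hlower
  rw [lt_div_iff₀ (by positivity)] at hlt
  nlinarith [mul_le_mul_of_nonneg_left hupper hs.1.le]

lemma exists_D_eq_zero_of_gt (hc1 : IsSolutionTrajectory z1 z2 g11 g22 g12 c1) (hz1 : 0 < z1)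
    (hz2 : z2 < 0) (hg11 : 0 ≤ g11) (hg22 : 0 ≤ g22) (hg12 : 0 < g12) {t₀ : ℝ} (ht₀ : 0 < t₀)
    (hD : D g11 g22 g12 (c1 t₀) t₀ < 0) : ∃ T, t₀ < T ∧ D g11 g22 g12 (c1 T) T = 0 := by
  by_contra! hne
  have hneg : ∀ t ∈ Ici t₀, D g11 g22 g12 (c1 t) t < 0 :=
    isPreconnected_Ici.forall_neg_of_ne_zero (hc1.continuousOn_D.mono (Ici_subset_Ioi.2 ht₀))
      self_mem_Ici hD fun t ht => ht.eq_or_lt.elim (fun h : t₀ = t => h ▸ hD.ne) (hne t)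
  have hlin : Tendsto (fun T => z1 - z2 * g12 * T) atTop atTop := by
    refine (tendsto_atTop_add_const_left atTop z1
      (tendsto_id.const_mul_atTop (neg_pos.2 (mul_neg_of_neg_of_pos hz2 hg12)))).congr fun T => ?_
    simp only [id]
    ring
  have hbound : Tendsto (fun T =>
      c1 t₀ - (log (z1 - z2 * g12 * T) - log (z1 - z2 * g12 * t₀)) / g12) atTop atBot := by
    refine (tendsto_atBot_add_const_left atTop (c1 t₀) (tendsto_neg_atTop_atBot.comp
      ((tendsto_atTop_add_const_right atTop (-log (z1 - z2 * g12 * t₀))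
        (tendsto_log_atTop.comp hlin)).atTop_div_const hg12))).congr fun T => ?_
    simp only [Function.comp]
    ring
  obtain ⟨T, hT0, hT⟩ := ((hbound.eventually_lt_atBot 0).and (eventually_gt_atTop t₀)).exists
  have := hc1.le_sub_log_sub_log_of_D_neg hz1 hz2 hg11 hg22 hg12 ht₀ hT.le
    fun t ht => hneg t ht.1.le
  linarith [(hc1 T (ht₀.trans hT)).1]

end IsSolutionTrajectory

end

/-- Lemma 2(3) of the paper: if `D < 0` at a point of a solution trajectory, then the
trajectory intersects the curve `{D = 0}` at least at two points, one on each side. -/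
theorem stmt6 (z1 z2 g11 g22 g12 c10 c20 : ℝ)
    (hz2 : z2 < 0) (hz1 : 0 < z1)
    (hg11 : 0 ≤ g11) (hg22 : 0 ≤ g22) (hg12 : 0 ≤ g12)
    (hc10 : 0 < c10) (hc20 : 0 < c20)
    (hD : D g11 g22 g12 c10 c20 < 0)
    (c1 : ℝ → ℝ)
    (h_pos : ∀ c2 : ℝ, 0 < c2 → 0 < c1 c2)
    (h_ode : ∀ c2 : ℝ, 0 < c2 → HasDerivAt c1 (F z1 z2 g11 g22 g12 (c1 c2) c2) c2)
    (h_init : c1 c20 = c10) :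
    (∃ c2a : ℝ, c2a ∈ Set.Ioo (0 : ℝ) c20 ∧ D g11 g22 g12 (c1 c2a) c2a = 0) ∧
    (∃ c2b : ℝ, c20 < c2b ∧ D g11 g22 g12 (c1 c2b) c2b = 0) := by
  have hc1 : IsSolutionTrajectory z1 z2 g11 g22 g12 c1 := fun t ht => ⟨h_pos t ht, h_ode t ht⟩
  have hg12' : 0 < g12 := by
    refine hg12.lt_of_ne fun h => ?_
    have hlt := one_div_add_lt_of_D_neg hg11 hg22 hc10 hc20 hD
    rw [← h, zero_pow two_ne_zero, zero_mul] at hlt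
    have : 0 < 1 / c10 + g11 := by positivity
    linarith
  rw [← h_init] at hD
  exact ⟨hc1.exists_D_eq_zero_of_lt hz1 hz2 hg11 hg22 hg12' hc20 hD,
    hc1.exists_D_eq_zero_of_gt hz1 hz2 hg11 hg22 hg12' hc20 hD⟩
end

section
/- Fix reals z1, z2 with z2 < 0 < z1 and strictly positive reals g11, g22, g12 with g12² > g11·g22. Let c1⁰, c2⁰ satisfy 0 < c1⁰ < g22/(g12² − g11·g22) and 0 < c2⁰ < g11/(g12² − g11·g22), and let c1 be a solution trajectory with c1(c2⁰) = c1⁰. Then D(c1(c2), c2) > 0 for every c2 > 0. -/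
/-- The unnamed lemma of Section 4.1 of the paper: trajectories starting in the box
`(0, g22/(g12² − g11 g22)) × (0, g11/(g12² − g11 g22))` remain in the locally convex
region `{D > 0}`, i.e. they are of type I. -/
theorem stmt7 (z1 z2 g11 g22 g12 c10 c20 : ℝ)
    (hz2 : z2 < 0) (hz1 : 0 < z1)
    (hg11 : 0 < g11) (hg22 : 0 < g22) (hg12 : 0 < g12)
    (hnc : g11 * g22 < g12 ^ 2)
    (hc10 : 0 < c10) (hc10' : c10 < g22 / (g12 ^ 2 - g11 * g22))
    (hc20 : 0 < c20) (hc20' : c20 < g11 / (g12 ^ 2 - g11 * g22))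
    (c1 : ℝ → ℝ)
    (h_pos : ∀ c2 : ℝ, 0 < c2 → 0 < c1 c2)
    (h_ode : ∀ c2 : ℝ, 0 < c2 → HasDerivAt c1 (F z1 z2 g11 g22 g12 (c1 c2) c2) c2)
    (h_init : c1 c20 = c10) :
    ∀ c2 : ℝ, 0 < c2 → 0 < D g11 g22 g12 (c1 c2) c2 := by
  have hK : 0 < g12 ^ 2 - g11 * g22 := by nlinarith
  -- the trajectory is strictly decreasing
  have hanti : StrictAntiOn c1 (Set.Ioi (0 : ℝ)) := by
    apply strictAntiOn_of_deriv_neg (convex_Ioi 0)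
    · intro x hx
      exact ((h_ode x hx).continuousAt).continuousWithinAt
    · intro x hx
      rw [interior_Ioi] at hx
      rw [(h_ode x hx).deriv]
      have hx0 : (0:ℝ) < x := hx
      have hc1x := h_pos x hx0
      apply div_neg_of_pos_of_neg
      · have : 0 < 1 / x + g22 := by positivity
        nlinarith [mul_pos (neg_pos.mpr hz2) hg12]
      · have : 0 < 1 / c1 x + g11 := by positivity
        nlinarith [mul_pos hz1 hg12]
  intro c2 hc2
  have hc1pos := h_pos c2 hc2
  have h1c1 : 0 < 1 / c1 c2 := by positivity
  have h1c2 : 0 < 1 / c2 := by positivity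
  unfold D
  rcases le_or_gt c2 (g11 / (g12 ^ 2 - g11 * g22)) with h | h
  · -- small c2: 1/c2 ≥ (g12²−g11g22)/g11
    have key : g12 ^ 2 - g11 * g22 ≤ g11 * (1 / c2) := by
      rw [mul_one_div, le_div_iff₀ hc2]
      have := (le_div_iff₀ hK).mp h
      nlinarith
    nlinarith [mul_pos h1c1 h1c2, mul_pos hg22 h1c1]
  · -- large c2: c1 c2 < c10 < g22/(g12²−g11g22)
    have hlt : c1 c2 < c10 := by
      have := hanti (Set.mem_Ioi.mpr hc20) (Set.mem_Ioi.mpr hc2) (lt_trans hc20' h)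
      rwa [h_init] at this
    have h10 : c10 * (g12 ^ 2 - g11 * g22) < g22 := (lt_div_iff₀ hK).mp hc10'
    have key : g12 ^ 2 - g11 * g22 < g22 * (1 / c1 c2) := by
      rw [mul_one_div, lt_div_iff₀ hc1pos]
      nlinarith
    nlinarith [mul_pos h1c1 h1c2, mul_pos hg11 h1c2]
end

section
/- Fix reals z1, z2 with z2 < 0 < z1, nonnegative reals g11, g22, g12, and c̄1, c̄2 > 0. Let H be the 2×2 symmetric real matrix with H11 = 1/c̄1 + g11, H22 = 1/c̄2 + g22, H12 = H21 = g12, and suppose det H > 0. Then for every real k ≠ 0, every real eigenvalue of the matrix A(k) = diag(c̄1, c̄2)·(k²·H + z·zᵀ) is strictly positive; that is, if A(k)·v = μ·v for some nonzero v ∈ ℝ² and μ ∈ ℝ, then μ > 0. -/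
set_option maxHeartbeats 1000000 in
/-- Lemma 4 of the paper: if the Hessian `H` of the entropy-plus-steric energy density at
the homogeneous state has positive determinant, then every real eigenvalue of
`A(k) = diag(c̄1, c̄2)·(k²·H + z·zᵀ)` is strictly positive for every `k ≠ 0`; hence the
homogeneous state is linearly stable under PNP-steric dynamics. -/
theorem stmt9 (z1 z2 g11 g22 g12 cbar1 cbar2 : ℝ)
    (hz2 : z2 < 0) (hz1 : 0 < z1)
    (hg11 : 0 ≤ g11) (hg22 : 0 ≤ g22) (hg12 : 0 ≤ g12)
    (hcbar1 : 0 < cbar1) (hcbar2 : 0 < cbar2)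
    (H : Matrix (Fin 2) (Fin 2) ℝ)
    (hH : H = !![1 / cbar1 + g11, g12; g12, 1 / cbar2 + g22])
    (hdet : 0 < H.det) :
    ∀ k : ℝ, k ≠ 0 →
      ∀ (v : Fin 2 → ℝ) (μ : ℝ), v ≠ 0 →
        (Matrix.diagonal ![cbar1, cbar2] *
          (k ^ 2 • H + Matrix.vecMulVec ![z1, z2] ![z1, z2])).mulVec v = μ • v →
        0 < μ := by
  subst hH
  intro k hk v μ hv heq
  have hdet' : 0 < (1 / cbar1 + g11) * (1 / cbar2 + g22) - g12 * g12 := by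
    rw [Matrix.det_fin_two_of] at hdet; linarith
  have e0 := congrFun heq 0
  have e1 := congrFun heq 1
  simp [Matrix.mulVec, dotProduct, Fin.sum_univ_two, Matrix.vecMulVec_apply,
    Matrix.mul_apply, Matrix.vecHead, Matrix.vecTail] at e0 e1
  have hvne : v 0 ≠ 0 ∨ v 1 ≠ 0 := by
    by_contra h
    push_neg at h
    exact hv (funext fun i => by fin_cases i <;> simp [h.1, h.2])
  clear heq hv hdet
  obtain ⟨v0, hv0⟩ : ∃ x, v 0 = x := ⟨v 0, rfl⟩
  obtain ⟨v1, hv1⟩ : ∃ x, v 1 = x := ⟨v 1, rfl⟩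
  rw [hv0, hv1] at e0 e1 hvne
  have hic1 : 0 < cbar1⁻¹ := inv_pos.mpr hcbar1
  have hic2 : 0 < cbar2⁻¹ := inv_pos.mpr hcbar2
  have hQ : 0 < (1 / cbar1 + g11) * v0 ^ 2 + 2 * g12 * v0 * v1
      + (1 / cbar2 + g22) * v1 ^ 2 := by
    rcases eq_or_ne v1 0 with h1 | h1
    · have h0 : v0 ≠ 0 := by rcases hvne with h | h; exact h; exact absurd h1 h
      have h2 : 0 < v0 ^ 2 := by positivity
      rw [h1]
      have : 0 < (1 / cbar1 + g11) * v0 ^ 2 := by positivity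
      linarith [this]
    · have h1' : 0 < v1 ^ 2 := by positivity
      nlinarith [sq_nonneg ((1 / cbar1 + g11) * v0 + g12 * v1), mul_pos hdet' h1',
        mul_pos (by positivity : (0:ℝ) < 1 / cbar1 + g11) h1']
  have hk2 : 0 < k ^ 2 := by positivity
  have key : k ^ 2 * ((1 / cbar1 + g11) * v0 ^ 2 + 2 * g12 * v0 * v1
      + (1 / cbar2 + g22) * v1 ^ 2) + (z1 * v0 + z2 * v1) ^ 2
      = μ * (v0 ^ 2 / cbar1 + v1 ^ 2 / cbar2) := by
    have hc1 : cbar1 ≠ 0 := ne_of_gt hcbar1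
    have hc2 : cbar2 ≠ 0 := ne_of_gt hcbar2
    field_simp at e0 e1 ⊢
    linear_combination (v0 * cbar2) * e0 + (v1 * cbar1) * e1
  have hden : 0 < v0 ^ 2 / cbar1 + v1 ^ 2 / cbar2 := by
    rcases hvne with h | h
    · have h2 : 0 < v0 ^ 2 / cbar1 := by positivity
      have h3 : 0 ≤ v1 ^ 2 / cbar2 := by positivity
      linarith
    · have h2 : 0 < v1 ^ 2 / cbar2 := by positivity
      have h3 : 0 ≤ v0 ^ 2 / cbar1 := by positivity
      linarith
  nlinarith [sq_nonneg (z1 * v0 + z2 * v1), mul_pos hk2 hQ]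
end

section
/- Fix reals z1, z2 with z2 < 0 < z1, nonnegative reals g11, g22, g12, and c̄1, c̄2 > 0. Let H be the 2×2 symmetric real matrix with H11 = 1/c̄1 + g11, H22 = 1/c̄2 + g22, H12 = H21 = g12, and suppose det H < 0. Then there exists K > 0 such that for every real k with |k| ≥ K: det(k²·H + z·zᵀ) < 0, and consequently there exists a nonzero vector v ∈ ℝ² with vᵀ·(k²·H + z·zᵀ)·v < 0, i.e., the symmetric matrix k²·H + z·zᵀ has a strictly negative eigenvalue. -/
/-!
By the matrix determinant lemma, `det (k² H + z zᵀ) = k⁴ det H + k² zᵀ (adj H) z`, which is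
negative once `k²` is large because `det H < 0`. A real `2 × 2` matrix `M` with `det M < 0` has an
indefinite quadratic form: the discriminant of `v ↦ vᵀ M v` is
`(m₁₂ + m₂₁)² - 4 m₁₁ m₂₂ ≥ 4 m₁₂ m₂₁ - 4 m₁₁ m₂₂ = -4 det M > 0`.
-/

open Matrix

theorem Matrix.det_fin_two_smul_add_vecMulVec {R : Type*} [CommRing R] (c : R)
    (A : Matrix (Fin 2) (Fin 2) R) (u v : Fin 2 → R) :
    (c • A + vecMulVec u v).det = c ^ 2 * A.det + c * (v ⬝ᵥ A.adjugate *ᵥ u) := by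
  simp only [det_fin_two, adjugate_fin_two, add_apply, smul_apply, vecMulVec_apply,
    dotProduct, mulVec, Fin.sum_univ_two, of_apply, cons_val', cons_val_zero, cons_val_one,
    empty_val', cons_val_fin_one, smul_eq_mul]
  ring

theorem exists_pos_forall_le_abs_sq_mul_add_neg {D : ℝ} (hD : D < 0) (B : ℝ) :
    ∃ K > 0, ∀ k : ℝ, K ≤ |k| → (k ^ 2) ^ 2 * D + k ^ 2 * B < 0 := by
  have hD' : 0 < -D := neg_pos.2 hD
  refine ⟨|B| / -D + 1, by positivity, fun k hk => ?_⟩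
  have hk_one : 1 ≤ |k| := le_trans (by linarith [div_nonneg (abs_nonneg B) hD'.le]) hk
  have hB : B < k ^ 2 * -D := by
    have : |B| / -D < k ^ 2 := by nlinarith [sq_abs k]
    calc B ≤ |B| := le_abs_self B
      _ < k ^ 2 * -D := (div_lt_iff₀ hD').1 this
  have hk_sq : 0 < k ^ 2 := by nlinarith [sq_abs k]
  nlinarith

theorem exists_ne_zero_binary_quadratic_neg {a b c : ℝ} (h : 0 < discrim a b c) :
    ∃ v : Fin 2 → ℝ, v ≠ 0 ∧ a * v 0 ^ 2 + b * v 0 * v 1 + c * v 1 ^ 2 < 0 := by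
  rw [discrim] at h
  rcases lt_trichotomy a 0 with ha | rfl | ha
  · exact ⟨![1, 0], fun hv => by simpa using congrFun hv 0, by simpa using ha⟩
  · have hb : b ≠ 0 := by rintro rfl; simp at h
    refine ⟨![-(c + 1), b], fun hv => hb (by simpa using congrFun hv 1), ?_⟩
    simp only [cons_val_zero, cons_val_one]
    nlinarith [mul_self_pos.2 hb]
  · -- completing the square: the value at `(-b, 2a)` is `a (4ac - b²)`
    refine ⟨![-b, 2 * a], fun hv => by simpa [ha.ne'] using congrFun hv 1, ?_⟩
    simp only [cons_val_zero, cons_val_one]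
    nlinarith

theorem Matrix.exists_dotProduct_mulVec_neg_of_det_neg {M : Matrix (Fin 2) (Fin 2) ℝ}
    (h : M.det < 0) : ∃ v : Fin 2 → ℝ, v ≠ 0 ∧ v ⬝ᵥ M *ᵥ v < 0 := by
  have hdiscrim : 0 < discrim (M 0 0) (M 0 1 + M 1 0) (M 1 1) := by
    rw [det_fin_two] at h; rw [discrim]
    nlinarith [sq_nonneg (M 0 1 - M 1 0)]
  obtain ⟨v, hv, hneg⟩ := exists_ne_zero_binary_quadratic_neg hdiscrim
  refine ⟨v, hv, ?_⟩
  convert hneg using 1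
  simp only [dotProduct, mulVec, Fin.sum_univ_two]
  ring

theorem stmt10_general (z1 z2 : ℝ)
    (H : Matrix (Fin 2) (Fin 2) ℝ)
    (hdet : H.det < 0) :
    ∃ K : ℝ, 0 < K ∧ ∀ k : ℝ, K ≤ |k| →
      (k ^ 2 • H + Matrix.vecMulVec ![z1, z2] ![z1, z2]).det < 0 ∧
      ∃ v : Fin 2 → ℝ, v ≠ 0 ∧
        dotProduct v
          ((k ^ 2 • H + Matrix.vecMulVec ![z1, z2] ![z1, z2]).mulVec v) < 0 := by
  obtain ⟨K, hK, hlarge⟩ :=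
    exists_pos_forall_le_abs_sq_mul_add_neg hdet (![z1, z2] ⬝ᵥ H.adjugate *ᵥ ![z1, z2])
  refine ⟨K, hK, fun k hk => ?_⟩
  have hdet_k : (k ^ 2 • H + vecMulVec ![z1, z2] ![z1, z2]).det < 0 := by
    rw [det_fin_two_smul_add_vecMulVec]
    exact hlarge k hk
  exact ⟨hdet_k, exists_dotProduct_mulVec_neg_of_det_neg hdet_k⟩

/-- Lemma 6 of the paper: if the Hessian `H` of the entropy-plus-steric energy density at
the homogeneous state has negative determinant, then for all sufficiently large wavenumbers
`k` the matrix `k²·H + z·zᵀ` has negative determinant, and consequently (being symmetric)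
it has a strictly negative eigenvalue, witnessed by a direction `v` with `vᵀ·(k²H+zzᵀ)·v < 0`;
hence the homogeneous state is linearly unstable under PNP-steric dynamics. -/
theorem stmt10 (z1 z2 g11 g22 g12 cbar1 cbar2 : ℝ)
    (hz2 : z2 < 0) (hz1 : 0 < z1)
    (hg11 : 0 ≤ g11) (hg22 : 0 ≤ g22) (hg12 : 0 ≤ g12)
    (hcbar1 : 0 < cbar1) (hcbar2 : 0 < cbar2)
    (H : Matrix (Fin 2) (Fin 2) ℝ)
    (hH : H = !![1 / cbar1 + g11, g12; g12, 1 / cbar2 + g22])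
    (hdet : H.det < 0) :
    ∃ K : ℝ, 0 < K ∧ ∀ k : ℝ, K ≤ |k| →
      (k ^ 2 • H + Matrix.vecMulVec ![z1, z2] ![z1, z2]).det < 0 ∧
      ∃ v : Fin 2 → ℝ, v ≠ 0 ∧
        dotProduct v
          ((k ^ 2 • H + Matrix.vecMulVec ![z1, z2] ![z1, z2]).mulVec v) < 0 :=
  stmt10_general z1 z2 H hdet
end

section
/- Fix reals z1, z2 with z2 < 0 < z1, nonnegative reals g11, g22, g12, and bulk concentrations c̄1, c̄2 > 0 with D(c̄1, c̄2) < 0. Then there exist ε > 0 and continuously differentiable functions c1, c2, E : (−ε, ε) → ℝ with c1(x) > 0 and c2(x) > 0 for all x, such that E(0) = 0, D(c1(0), c2(0)) = 0, c1′(0) ≠ 0, and for all x ∈ (−ε, ε): E′(x) = −(z1·(c1(x) − c̄1) + z2·(c2(x) − c̄2)), c2(x)·D(c1(x), c2(x))·c1′(x) = −(z1·(1 + g22·c2(x)) − z2·g12·c2(x))·E(x), and c1(x)·D(c1(x), c2(x))·c2′(x) = −(z2·(1 + g11·c1(x)) − z1·g12·c1(x))·E(x). -/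
/-!
Write the right-hand sides of the multiplied equations as `-K2(c2) E` and `-K3(c1) E`. Dividing
them gives `c1 K2(c2) c2' = c2 K3(c1) c1'`; both `K`s are affine, so separating variables yields an
explicit curve `c2 = ψ(c1)` through a chosen point `(a, b)` of `{D = 0}`. On that curve the system
reduces to `G(c1) c1' = -E`, `E' = -R(c1)` with `G = c2 D / K2` and `R` the charge density, which
has the first integral `E² = 2 Q(c1)`, `Q = ∫ₐ R G`. As `G` vanishes transversally at `a`, `Q / G²`
extends continuously across `a` with the value `R(a) / (2 G'(a))`. When this is positive,
`c1' = √(2 Q / G²)(c1)` is a nonsingular autonomous equation, and `E = -G(c1) c1'` then solves the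
system through the singular point. Both `R(a)` and `G'(a)` are positive once `a` is large.
-/

open Set Filter Topology

theorem exists_hasDerivAt_localInverse {𝕜 : Type*} [RCLike 𝕜] {f f' : 𝕜 → 𝕜} {a : 𝕜}
    (hf : ∀ᶠ x in 𝓝 a, HasDerivAt f (f' x) x) (hf' : ContinuousAt f' a) (ha : f' a ≠ 0) :
    ∃ g : 𝕜 → 𝕜, g (f a) = a ∧ ∀ᶠ y in 𝓝 (f a), HasDerivAt g (f' (g y))⁻¹ y := by
  have hs := (hasStrictDerivAt_of_hasDerivAt_of_continuousAt hf hf').hasStrictFDerivAt_equiv ha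
  set e := hs.toOpenPartialHomeomorph f
  have hsource : a ∈ e.source := hs.mem_toOpenPartialHomeomorph_source
  have hcoe : (e : 𝕜 → 𝕜) = f := hs.toOpenPartialHomeomorph_coe
  have hfa : f a ∈ e.target := hcoe ▸ e.map_source hsource
  have hea : e.symm (f a) = a := hcoe ▸ e.left_inv hsource
  have htendsto : Tendsto e.symm (𝓝 (f a)) (𝓝 a) := by
    simpa only [ContinuousAt, hea] using e.continuousAt_symm hfa
  refine ⟨e.symm, hea, ?_⟩
  filter_upwards [e.open_target.mem_nhds hfa,
    htendsto.eventually (hf.and (hf'.eventually_ne ha))] with y hy ⟨hd, hne⟩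
  exact e.hasDerivAt_symm hy hne hd

theorem eventually_hasDerivAt_integral {E : Type*} [NormedAddCommGroup E] [NormedSpace ℝ E]
    [CompleteSpace E] {f : ℝ → E} {a : ℝ} (hf : ∀ᶠ t in 𝓝 a, ContinuousAt f t) :
    ∀ᶠ u in 𝓝 a, HasDerivAt (fun u => ∫ t in a..u, f t) (f u) u := by
  obtain ⟨r, hr, hball⟩ := Metric.eventually_nhds_iff_ball.mp hf
  have hcont : ContinuousOn f (Metric.ball a r) := fun t ht => (hball t ht).continuousWithinAt
  filter_upwards [Metric.ball_mem_nhds a hr] with u hu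
  have hsub : uIcc a u ⊆ Metric.ball a r :=
    (convex_ball a r).ordConnected.uIcc_subset (Metric.mem_ball_self hr) hu
  exact intervalIntegral.integral_hasDerivAt_right ((hcont.mono hsub).intervalIntegrable)
    (hcont.stronglyMeasurableAtFilter Metric.isOpen_ball u hu) (hball u hu)

theorem contDiffOn_one_of_hasDerivAt {𝕜 F : Type*} [NontriviallyNormedField 𝕜]
    [NormedAddCommGroup F] [NormedSpace 𝕜 F] {f f' : 𝕜 → F} {S : Set 𝕜} (hS : IsOpen S)
    (hf : ∀ x ∈ S, HasDerivAt f (f' x) x) (hf' : ContinuousOn f' S) :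
    ContDiffOn 𝕜 1 f S := by
  rw [show (1 : WithTop ℕ∞) = 0 + 1 from rfl, contDiffOn_succ_iff_deriv_of_isOpen hS]
  refine ⟨fun x hx => (hf x hx).differentiableAt.differentiableWithinAt, by simp, ?_⟩
  rw [contDiffOn_zero]
  exact hf'.congr fun x hx => (hf x hx).deriv

theorem exists_local_solution_of_autonomous {s : ℝ → ℝ} {a : ℝ} {N : Set ℝ} (hN : N ∈ 𝓝 a)
    (hs : ∀ᶠ u in 𝓝 a, ContinuousAt s u) (ha : s a ≠ 0) :
    ∃ ε > 0, ∃ U : ℝ → ℝ, U 0 = a ∧ ContDiffOn ℝ 1 U (Ioo (-ε) ε) ∧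
      ∀ x ∈ Ioo (-ε) ε, U x ∈ N ∧ HasDerivAt U (s (U x)) x := by
  have hinv : ∀ᶠ u in 𝓝 a, ContinuousAt (fun t => (s t)⁻¹) u := by
    filter_upwards [hs, hs.self_of_nhds.eventually_ne ha] with u hcont hne
    exact hcont.inv₀ hne
  -- `U` inverts the travel time `x(u) = ∫ₐᵘ dt / s(t)`
  obtain ⟨U, hU0, hU⟩ := exists_hasDerivAt_localInverse (eventually_hasDerivAt_integral hinv)
    hinv.self_of_nhds (inv_ne_zero ha)
  simp only [intervalIntegral.integral_same, inv_inv] at hU0 hU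
  have hUa : Tendsto U (𝓝 0) (𝓝 a) := hU0 ▸ hU.self_of_nhds.continuousAt
  obtain ⟨ε, hε, hball⟩ := Metric.eventually_nhds_iff_ball.mp
    (hU.and (hUa.eventually ((eventually_mem_set.mpr hN).and hs)))
  rw [Real.ball_eq_Ioo, zero_sub, zero_add] at hball
  refine ⟨ε, hε, U, hU0, contDiffOn_one_of_hasDerivAt isOpen_Ioo (fun x hx => (hball x hx).1)
    fun x hx => ?_, fun x hx => ⟨(hball x hx).2.1, (hball x hx).1⟩⟩
  exact ((hball x hx).2.2.comp (hball x hx).1.continuousAt).continuousWithinAt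

theorem HasDerivAt.mul_continuousAt_of_eq_zero {𝕜 : Type*} [NontriviallyNormedField 𝕜]
    {f g : 𝕜 → 𝕜} {f' a : 𝕜} (hf : HasDerivAt f f' a)
    (hfa : f a = 0) (hg : ContinuousAt g a) :
    HasDerivAt (fun x => f x * g x) (f' * g a) a := by
  rw [hasDerivAt_iff_tendsto_slope] at hf ⊢
  refine (hf.mul (hg.tendsto.mono_left nhdsWithin_le_nhds)).congr fun v => ?_
  simp only [slope_def_field, hfa, zero_mul, sub_zero]
  ring

theorem tendsto_div_sq_of_hasDerivAt {Q G G' R : ℝ → ℝ} {a : ℝ}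
    (hQ : ∀ᶠ u in 𝓝 a, HasDerivAt Q (R u * G u) u) (hG : ∀ᶠ u in 𝓝 a, HasDerivAt G (G' u) u)
    (hR : ContinuousAt R a) (hG' : ContinuousAt G' a) (hQa : Q a = 0) (hGa : G a = 0)
    (hG'a : G' a ≠ 0) :
    Tendsto (fun u => Q u / G u ^ 2) (𝓝[≠] a) (𝓝 (R a / (2 * G' a))) := by
  have hGne : ∀ᶠ u in 𝓝[≠] a, G u ≠ 0 := hG.self_of_nhds.eventually_ne hG'a
  have hG'ne : ∀ᶠ u in 𝓝[≠] a, G' u ≠ 0 :=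
    nhdsWithin_le_nhds (hG'.eventually_ne hG'a)
  have hzero : ∀ {F : ℝ → ℝ}, ContinuousAt F a → F a = 0 → Tendsto F (𝓝[≠] a) (𝓝 0) :=
    fun hF hFa => hFa ▸ hF.tendsto.mono_left nhdsWithin_le_nhds
  refine HasDerivAt.lhopital_zero_nhdsNE (g' := fun u => 2 * G u * G' u)
    (nhdsWithin_le_nhds hQ) (nhdsWithin_le_nhds (hG.mono fun u hu => ?_)) ?_
    (hzero hQ.self_of_nhds.continuousAt hQa)
    (hzero (hG.self_of_nhds.continuousAt.pow 2) (by simp [hGa])) ?_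
  · simpa using hu.fun_pow 2
  · filter_upwards [hGne, hG'ne] with u h1 h2
    positivity
  · have hlim : ContinuousAt (fun u => R u / (2 * G' u)) a :=
      hR.div (continuousAt_const.mul hG') (by simpa using hG'a)
    refine (hlim.tendsto.mono_left nhdsWithin_le_nhds).congr' ?_
    filter_upwards [hGne] with u hu
    field_simp

theorem hasDerivAt_mul_sqrt_div_sq {G Q : ℝ → ℝ} {g' r u : ℝ} (hG : HasDerivAt G g' u)
    (hQ : HasDerivAt Q (r * G u) u) (hGu : G u ≠ 0) (hpos : 0 < Q u / G u ^ 2) :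
    HasDerivAt (fun v => G v * √(2 * (Q v / G v ^ 2))) (r / √(2 * (Q u / G u ^ 2))) u := by
  have hs := ((hQ.fun_div (hG.fun_pow 2) (pow_ne_zero 2 hGu)).const_mul 2).sqrt (by positivity)
  refine (hG.mul hs).congr_deriv ?_
  obtain ⟨S, hS⟩ : ∃ S, √(2 * (Q u / G u ^ 2)) = S := ⟨_, rfl⟩
  have hS0 : S ≠ 0 := hS ▸ by positivity
  have hQu : Q u = S ^ 2 * G u ^ 2 / 2 := by
    rw [← hS, Real.sq_sqrt (by positivity)]
    field_simp
  simp only [hS]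
  rw [hQu]
  field_simp
  ring

theorem exists_energy_factorization {G G' R : ℝ → ℝ} {a : ℝ}
    (hG : ∀ᶠ u in 𝓝 a, HasDerivAt G (G' u) u) (hG' : ContinuousAt G' a)
    (hR : ∀ᶠ u in 𝓝 a, ContinuousAt R u) (hGa : G a = 0) (hRG : 0 < R a / G' a) :
    ∃ s W : ℝ → ℝ, ∀ᶠ u in 𝓝 a,
      0 < s u ∧ ContinuousAt s u ∧ W u = G u * s u ∧ HasDerivAt W (R u / s u) u := by
  set Q := fun u => ∫ t in a..u, R t * G t
  have hQ : ∀ᶠ u in 𝓝 a, HasDerivAt Q (R u * G u) u := by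
    refine eventually_hasDerivAt_integral ?_
    filter_upwards [hR, hG] with u hRu hGu
    exact hRu.mul hGu.continuousAt
  have hG'a : G' a ≠ 0 := fun h => by simp [h] at hRG
  set ρ := Function.update (fun u => Q u / G u ^ 2) a (R a / (2 * G' a))
  have hρa : ContinuousAt ρ a := continuousAt_update_same.mpr <|
    tendsto_div_sq_of_hasDerivAt hQ hG hR.self_of_nhds hG' intervalIntegral.integral_same hGa hG'a
  have h2ρ : 2 * ρ a = R a / G' a := by
    simp only [ρ, Function.update_self]
    field_simp
  have hρ : ∀ᶠ u in 𝓝 a, 0 < ρ u := hρa.eventually (lt_mem_nhds (by linarith))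
  refine ⟨fun u => √(2 * ρ u), fun u => G u * √(2 * ρ u), ?_⟩
  rw [← nhdsNE_sup_pure, eventually_sup, eventually_pure]
  constructor
  · filter_upwards [nhdsWithin_le_nhds (hG.and (hQ.and (hR.and hρ))),
      hG.self_of_nhds.eventually_ne hG'a, self_mem_nhdsWithin] with u ⟨hGu, hQu, hRu, hρu⟩ hG0 hua
    have hρeq : ρ =ᶠ[𝓝 u] fun v => Q v / G v ^ 2 := by
      filter_upwards [isOpen_compl_singleton.mem_nhds hua] with v hv
      exact Function.update_of_ne hv _ _
    have hρu' : ρ u = Q u / G u ^ 2 := hρeq.self_of_nhds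
    refine ⟨by positivity, ?_, rfl, ?_⟩
    · refine Real.continuous_sqrt.continuousAt.comp (continuousAt_const.mul ?_)
      exact (hQu.continuousAt.div (hGu.continuousAt.pow 2) (pow_ne_zero 2 hG0)).congr hρeq.symm
    · rw [hρu']
      refine (hasDerivAt_mul_sqrt_div_sq hGu hQu hG0 (hρu' ▸ hρu)).congr_of_eventuallyEq ?_
      filter_upwards [hρeq] with v hv
      rw [hv]
  · have hs : ContinuousAt (fun u => √(2 * ρ u)) a :=
      Real.continuous_sqrt.continuousAt.comp (continuousAt_const.mul hρa)
    refine ⟨Real.sqrt_pos.mpr (by linarith), hs, rfl, ?_⟩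
    refine (hG.self_of_nhds.mul_continuousAt_of_eq_zero hGa hs).congr_deriv ?_
    dsimp only
    have hne : √(R a / G' a) ≠ 0 := (Real.sqrt_pos.mpr hRG).ne'
    rw [show √(2 * ρ a) = √(R a / G' a) by rw [h2ρ], eq_div_iff hne, mul_assoc,
      Real.mul_self_sqrt hRG.le]
    field_simp

theorem exists_local_solution_reduced {G G' R : ℝ → ℝ} {a : ℝ} {N : Set ℝ} (hN : N ∈ 𝓝 a)
    (hG : ∀ᶠ u in 𝓝 a, HasDerivAt G (G' u) u) (hG' : ContinuousAt G' a)
    (hR : ∀ᶠ u in 𝓝 a, ContinuousAt R u) (hGa : G a = 0) (hRG : 0 < R a / G' a) :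
    ∃ ε > 0, ∃ c E : ℝ → ℝ, c 0 = a ∧ E 0 = 0 ∧ deriv c 0 ≠ 0 ∧
      ContDiffOn ℝ 1 c (Ioo (-ε) ε) ∧ ContDiffOn ℝ 1 E (Ioo (-ε) ε) ∧
      ∀ x ∈ Ioo (-ε) ε, c x ∈ N ∧ deriv E x = -R (c x) ∧ G (c x) * deriv c x = -E x := by
  obtain ⟨s, W, hsW⟩ := exists_energy_factorization hG hG' hR hGa hRG
  obtain ⟨ε, hε, c, hc0, hcC, hc⟩ := exists_local_solution_of_autonomous
    (inter_mem hN (hsW.and hR)) (hsW.mono fun u h => h.2.1) hsW.self_of_nhds.1.ne'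
  have hE : ∀ x ∈ Ioo (-ε) ε, HasDerivAt (fun x => -W (c x)) (-R (c x)) x := fun x hx => by
    obtain ⟨⟨-, ⟨hs0, -, -, hWd⟩, -⟩, hcd⟩ := hc x hx
    simpa [hs0.ne'] using (hWd.comp x hcd).fun_neg
  have h0 : (0 : ℝ) ∈ Ioo (-ε) ε := ⟨neg_neg_iff_pos.mpr hε, hε⟩
  refine ⟨ε, hε, c, fun x => -W (c x), hc0, by simp [hc0, hsW.self_of_nhds.2.2.1, hGa], ?_, hcC,
    contDiffOn_one_of_hasDerivAt isOpen_Ioo hE fun x hx => ?_, fun x hx => ?_⟩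
  · rw [(hc 0 h0).2.deriv, hc0]
    exact hsW.self_of_nhds.1.ne'
  · exact ((hc x hx).1.2.2.comp (hc x hx).2.continuousAt).fun_neg.continuousWithinAt
  · obtain ⟨⟨hcN, ⟨-, -, hWG, -⟩, -⟩, hcd⟩ := hc x hx
    exact ⟨hcN, (hE x hx).deriv, by simp only [hcd.deriv, hWG, neg_neg]⟩

theorem exists_solution_separable (z1 k z2 l a b : ℝ) (ha : 0 < a) (hb : 0 < b)
    (hK : z1 + k * b ≠ 0) :
    ∃ ψ : ℝ → ℝ, ψ a = b ∧ (∀ u, 0 < ψ u) ∧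
      ∀ᶠ u in 𝓝 a, HasDerivAt ψ (ψ u * (z2 + l * u) / (u * (z1 + k * ψ u))) u := by
  -- separating variables, `z1 log ψ + k ψ = z2 log u + l u + const`
  set B := fun w => z1 * w + k * Real.exp w
  have hB : ∀ w, HasDerivAt B (z1 + k * Real.exp w) w := fun w => by
    simpa using ((hasDerivAt_id w).const_mul z1).fun_add ((Real.hasDerivAt_exp w).const_mul k)
  obtain ⟨g, hg0, hg⟩ := exists_hasDerivAt_localInverse (Eventually.of_forall hB)
    (Continuous.continuousAt (by fun_prop)) (by rwa [Real.exp_log hb])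
  set F := fun u => z2 * Real.log u + l * u + (B (Real.log b) - (z2 * Real.log a + l * a))
  have hF : ∀ u, u ≠ 0 → HasDerivAt F (z2 / u + l) u := fun u hu =>
    ((((Real.hasDerivAt_log hu).const_mul z2).fun_add ((hasDerivAt_id' u).const_mul l)).add_const
      _).congr_deriv (by simp [div_eq_mul_inv])
  have hFa : F a = B (Real.log b) := by simp only [F]; ring
  have hFt : Tendsto F (𝓝 a) (𝓝 (B (Real.log b))) := hFa ▸ (hF a ha.ne').continuousAt
  refine ⟨fun u => Real.exp (g (F u)), by simp [hFa, hg0, Real.exp_log hb],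
    fun u => Real.exp_pos _, ?_⟩
  filter_upwards [hFt.eventually hg, lt_mem_nhds ha] with u hgu hu
  refine ((Real.hasDerivAt_exp _).comp u (hgu.comp u (hF u hu.ne'))).congr_deriv ?_
  simp only [Function.comp_apply]
  field_simp

theorem mul_lt_sq_of_D_neg {g11 g22 g12 c1 c2 : ℝ} (hc1 : 0 < c1) (hc2 : 0 < c2)
    (hg11 : 0 ≤ g11) (hg22 : 0 ≤ g22) (hD : D g11 g22 g12 c1 c2 < 0) : g11 * g22 < g12 ^ 2 := by
  unfold D at hD
  have h1 : 0 < 1 / c1 := by positivity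
  have h2 : 0 < 1 / c2 := by positivity
  nlinarith [mul_pos h1 h2, mul_nonneg h1.le hg22, mul_nonneg hg11 h2.le]

theorem exists_crossing_point {z1 z2 g11 g22 g12 : ℝ} (cbar1 cbar2 : ℝ) (hz1 : 0 < z1)
    (hz2 : z2 ≤ 0) (hg11 : 0 ≤ g11) (hg22 : 0 ≤ g22) (hg12 : 0 ≤ g12)
    (hP : g11 * g22 < g12 ^ 2) :
    ∃ a b, 0 < a ∧ 0 < b ∧ D g11 g22 g12 a b = 0 ∧ 0 < z1 * (a - cbar1) + z2 * (b - cbar2) ∧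
      0 < -(z2 * (1 + g11 * a) - z1 * g12 * a) * (1 + g11 * a)
        - (z1 * (1 + g22 * b) - z2 * g12 * b) * (1 + g22 * b) := by
  -- for large `a`, the point `(a, b a)` of `{D = 0}` has `b a → g11 / P`
  set P := g12 ^ 2 - g11 * g22
  have hP0 : 0 < P := sub_pos.mpr hP
  set b := fun a => (1 + g11 * a) / (P * a - g22)
  have hden : Tendsto (fun a => P * a - g22) atTop atTop :=
    tendsto_atTop_add_const_right _ _ (tendsto_id.const_mul_atTop hP0)
  have hb : Tendsto b atTop (𝓝 (g11 / P)) := by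
    have h := (tendsto_inv_atTop_zero.add_const g11).div
      ((tendsto_inv_atTop_zero.const_mul g22).const_sub P) (by simpa using hP0.ne')
    simp only [zero_add, mul_zero, sub_zero] at h
    refine h.congr' ?_
    filter_upwards [eventually_gt_atTop 0] with a ha
    simp only [b, Pi.div_apply]
    field_simp
  have hR : Tendsto (fun a => z1 * (a - cbar1) + z2 * (b a - cbar2)) atTop atTop :=
    (tendsto_atTop_add_const_right _ _ tendsto_id).const_mul_atTop hz1 |>.atTop_add
      ((hb.sub_const cbar2).const_mul z2)
  have hg12' : 0 < g12 := by nlinarith [mul_nonneg hg11 hg22]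
  have hK3 : Tendsto (fun a => -(z2 * (1 + g11 * a) - z1 * g12 * a)) atTop atTop := by
    refine (tendsto_atTop_add_const_right _ (-z2)
      (tendsto_id.const_mul_atTop (by nlinarith : 0 < z1 * g12 - z2 * g11))).congr fun a => ?_
    simp only [id]
    ring
  have hT : Tendsto (fun a => -(z2 * (1 + g11 * a) - z1 * g12 * a) * (1 + g11 * a)
      - (z1 * (1 + g22 * b a) - z2 * g12 * b a) * (1 + g22 * b a)) atTop atTop := by
    have hK2 := ((Continuous.tendsto (f := fun c => (z1 * (1 + g22 * c) - z2 * g12 * c) *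
      (1 + g22 * c)) (by fun_prop) _).comp hb).neg
    refine Tendsto.atTop_add (tendsto_atTop_mono' _ ?_ hK3) hK2
    filter_upwards [hK3.eventually_ge_atTop 0, eventually_ge_atTop 0] with a h1 h2
    nlinarith [mul_nonneg h1 (mul_nonneg hg11 h2)]
  obtain ⟨a, ⟨ha, hPa⟩, hRa, hTa⟩ := ((eventually_gt_atTop 0).and (hden.eventually_gt_atTop 0)
    |>.and ((hR.eventually_gt_atTop 0).and (hT.eventually_gt_atTop 0))).exists
  refine ⟨a, b a, ha, div_pos (by positivity) hPa, ?_, hRa, hTa⟩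
  simp only [D, b, P] at hPa ⊢
  field_simp
  ring

theorem hasDerivAt_D_comp {g11 g22 g12 u p : ℝ} {ψ : ℝ → ℝ} (hψ : HasDerivAt ψ p u)
    (hu : u ≠ 0) (hψu : ψ u ≠ 0) :
    HasDerivAt (fun v => D g11 g22 g12 v (ψ v))
      (-(1 / ψ u + g22) / u ^ 2 - (1 / u + g11) * p / ψ u ^ 2) u := by
  have h := ((((hasDerivAt_id' u).fun_inv hu).add_const g11).fun_mul
    ((hψ.fun_inv hψu).add_const g22)).sub_const (g12 ^ 2)
  simp only [D, one_div]
  exact h.congr_deriv (by ring)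

theorem hasDerivAt_profile_of_D_eq_zero {z1 z2 k l g11 g22 g12 a : ℝ} {ψ : ℝ → ℝ} (ha : 0 < a)
    (hψa : 0 < ψ a) (hK : z1 + k * ψ a ≠ 0)
    (hψ : HasDerivAt ψ (ψ a * (z2 + l * a) / (a * (z1 + k * ψ a))) a)
    (hD : D g11 g22 g12 a (ψ a) = 0) :
    HasDerivAt (fun u => ψ u * D g11 g22 g12 u (ψ u) / (z1 + k * ψ u))
      ((-(z2 + l * a) * (1 + g11 * a) - (z1 + k * ψ a) * (1 + g22 * ψ a)) /
        (a ^ 2 * (z1 + k * ψ a) ^ 2)) a := by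
  have hfactor : ContinuousAt (fun u => ψ u / (z1 + k * ψ u)) a := by
    have := hψ.continuousAt
    fun_prop (disch := assumption)
  have h := (hasDerivAt_D_comp hψ ha.ne' hψa.ne').mul_continuousAt_of_eq_zero hD hfactor
  refine (h.congr_deriv ?_).congr_of_eventuallyEq (Eventually.of_forall fun u => by ring)
  have hK' : z1 + ψ a * k ≠ 0 := mul_comm k (ψ a) ▸ hK
  field_simp
  ring

theorem contDiffOn_of_hasDerivAt_separable {z1 z2 k l : ℝ} {ψ : ℝ → ℝ} {V : Set ℝ}
    (hV : IsOpen V) (hψ : ∀ u ∈ V, HasDerivAt ψ (ψ u * (z2 + l * u) / (u * (z1 + k * ψ u))) u)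
    (hV0 : ∀ u ∈ V, u ≠ 0) (hK : ∀ u ∈ V, z1 + k * ψ u ≠ 0) : ContDiffOn ℝ 1 ψ V := by
  refine contDiffOn_one_of_hasDerivAt hV hψ fun u hu => ?_
  have hψu := (hψ u hu).continuousAt
  have hne : u * (z1 + k * ψ u) ≠ 0 := mul_ne_zero (hV0 u hu) (hK u hu)
  exact ContinuousAt.continuousWithinAt (by fun_prop (disch := assumption))

theorem multiplied_form_of_profile {z1 z2 g11 g22 g12 u c c' e : ℝ} (hu : u ≠ 0)
    (hK : z1 + (z1 * g22 - z2 * g12) * c ≠ 0)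
    (hE : c * D g11 g22 g12 u c / (z1 + (z1 * g22 - z2 * g12) * c) * c' = -e) :
    c * D g11 g22 g12 u c * c' = -(z1 * (1 + g22 * c) - z2 * g12 * c) * e ∧
      u * D g11 g22 g12 u c *
        (c * (z2 + (z2 * g11 - z1 * g12) * u) / (u * (z1 + (z1 * g22 - z2 * g12) * c)) * c') =
        -(z2 * (1 + g11 * u) - z1 * g12 * u) * e := by
  rw [show z1 * (1 + g22 * c) - z2 * g12 * c = z1 + (z1 * g22 - z2 * g12) * c by ring]
  generalize z1 + (z1 * g22 - z2 * g12) * c = K at hK hE ⊢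
  obtain rfl : e = -(c * D g11 g22 g12 u c / K * c') := by rw [hE, neg_neg]
  constructor
  · field_simp
  · field_simp
    ring

theorem exists_crossing_solution_of_curve {z1 z2 g11 g22 g12 cbar1 cbar2 a : ℝ} {ψ : ℝ → ℝ}
    (hz1 : 0 < z1) (hz2 : z2 ≤ 0) (hg22 : 0 ≤ g22) (hg12 : 0 ≤ g12) (ha : 0 < a)
    (hψpos : ∀ u, 0 < ψ u)
    (hψ : ∀ᶠ u in 𝓝 a, HasDerivAt ψ
      (ψ u * (z2 + (z2 * g11 - z1 * g12) * u) / (u * (z1 + (z1 * g22 - z2 * g12) * ψ u))) u)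
    (hD : D g11 g22 g12 a (ψ a) = 0) (hR : 0 < z1 * (a - cbar1) + z2 * (ψ a - cbar2))
    (hT : 0 < -(z2 * (1 + g11 * a) - z1 * g12 * a) * (1 + g11 * a)
        - (z1 * (1 + g22 * ψ a) - z2 * g12 * ψ a) * (1 + g22 * ψ a)) :
    ∃ ε : ℝ, 0 < ε ∧
    ∃ c1 c2 E : ℝ → ℝ,
      ContDiffOn ℝ 1 c1 (Set.Ioo (-ε) ε) ∧
      ContDiffOn ℝ 1 c2 (Set.Ioo (-ε) ε) ∧
      ContDiffOn ℝ 1 E (Set.Ioo (-ε) ε) ∧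
      (∀ x ∈ Set.Ioo (-ε) ε, 0 < c1 x ∧ 0 < c2 x) ∧
      E 0 = 0 ∧
      D g11 g22 g12 (c1 0) (c2 0) = 0 ∧
      deriv c1 0 ≠ 0 ∧
      ∀ x ∈ Set.Ioo (-ε) ε,
        deriv E x = -(z1 * (c1 x - cbar1) + z2 * (c2 x - cbar2)) ∧
        c2 x * D g11 g22 g12 (c1 x) (c2 x) * deriv c1 x =
          -(z1 * (1 + g22 * c2 x) - z2 * g12 * c2 x) * E x ∧
        c1 x * D g11 g22 g12 (c1 x) (c2 x) * deriv c2 x =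
          -(z2 * (1 + g11 * c1 x) - z1 * g12 * c1 x) * E x := by
  set k := z1 * g22 - z2 * g12
  have hK : ∀ u, 0 < z1 + k * ψ u := fun u => by
    have : 0 ≤ k := by nlinarith
    nlinarith [mul_nonneg this (hψpos u).le]
  obtain ⟨V, hVψ, hV, haV⟩ := eventually_nhds_iff.mp (hψ.and (lt_mem_nhds ha))
  have hVa : V ∈ 𝓝 a := hV.mem_nhds haV
  have hψC : ContDiffOn ℝ 1 ψ V := contDiffOn_of_hasDerivAt_separable hV
    (fun u hu => (hVψ u hu).1) (fun u hu => (hVψ u hu).2.ne') fun u _ => (hK u).ne'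
  -- along the curve `c2 = ψ c1`, the first equation reads `G c1 * c1' = -E`
  set G := fun u => ψ u * D g11 g22 g12 u (ψ u) / (z1 + k * ψ u)
  have hGC : ContDiffOn ℝ 1 G V := by
    have hV0 : ∀ u ∈ V, u ≠ 0 := fun u hu => (hVψ u hu).2.ne'
    have hψ0 : ∀ u ∈ V, ψ u ≠ 0 := fun u _ => (hψpos u).ne'
    have hK0 : ∀ u ∈ V, z1 + k * ψ u ≠ 0 := fun u _ => (hK u).ne'
    simp only [G, D]
    fun_prop (disch := assumption)
  have hGa := hasDerivAt_profile_of_D_eq_zero ha (hψpos a) (hK a).ne' (hVψ a haV).1 hD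
  obtain ⟨ε, hε, c, E, hc0, hE0, hc0', hcC, hEC, hc⟩ := exists_local_solution_reduced
    (G' := deriv G) (R := fun u => z1 * (u - cbar1) + z2 * (ψ u - cbar2)) hVa
    (eventually_of_mem hVa fun u hu =>
      ((hGC.differentiableOn one_ne_zero u hu).differentiableAt (hV.mem_nhds hu)).hasDerivAt)
    ((hGC.continuousOn_deriv_of_isOpen hV le_rfl).continuousAt hVa)
    (eventually_of_mem hVa fun u hu => by
      have := (hVψ u hu).1.continuousAt
      fun_prop)
    (by simp [G, hD])
    (by rw [hGa.deriv]; exact div_pos hR (div_pos (by linarith) (by have := hK a; positivity)))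
  refine ⟨ε, hε, c, fun x => ψ (c x), E, hcC, hψC.comp hcC fun x hx => (hc x hx).1, hEC,
    fun x hx => ⟨(hVψ _ (hc x hx).1).2, hψpos _⟩, hE0, by simpa only [hc0], hc0', fun x hx => ?_⟩
  obtain ⟨hcV, hEd, hGE⟩ := hc x hx
  have hcd := ((hcC.differentiableOn one_ne_zero x hx).differentiableAt
    (isOpen_Ioo.mem_nhds hx)).hasDerivAt
  have hc2 : HasDerivAt (fun x => ψ (c x)) _ x := (hVψ _ hcV).1.comp x hcd
  rw [hc2.deriv]
  exact ⟨hEd, multiplied_form_of_profile (hVψ _ hcV).2.ne' (hK _).ne' hGE⟩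

/-- Lemma 5 of the paper: in the concentrated regime `D(c̄1, c̄2) < 0`, there exists a
smooth nonconstant local solution of the Poisson–Boltzmann-steric stationary system
(written in multiplied form) that crosses the singular curve `{D = 0}`. -/
theorem stmt12 (z1 z2 g11 g22 g12 cbar1 cbar2 : ℝ)
    (hz2 : z2 < 0) (hz1 : 0 < z1)
    (hg11 : 0 ≤ g11) (hg22 : 0 ≤ g22) (hg12 : 0 ≤ g12)
    (hcbar1 : 0 < cbar1) (hcbar2 : 0 < cbar2)
    (hD : D g11 g22 g12 cbar1 cbar2 < 0) :
    ∃ ε : ℝ, 0 < ε ∧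
    ∃ c1 c2 E : ℝ → ℝ,
      ContDiffOn ℝ 1 c1 (Set.Ioo (-ε) ε) ∧
      ContDiffOn ℝ 1 c2 (Set.Ioo (-ε) ε) ∧
      ContDiffOn ℝ 1 E (Set.Ioo (-ε) ε) ∧
      (∀ x ∈ Set.Ioo (-ε) ε, 0 < c1 x ∧ 0 < c2 x) ∧
      E 0 = 0 ∧
      D g11 g22 g12 (c1 0) (c2 0) = 0 ∧
      deriv c1 0 ≠ 0 ∧
      ∀ x ∈ Set.Ioo (-ε) ε,
        deriv E x = -(z1 * (c1 x - cbar1) + z2 * (c2 x - cbar2)) ∧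
        c2 x * D g11 g22 g12 (c1 x) (c2 x) * deriv c1 x =
          -(z1 * (1 + g22 * c2 x) - z2 * g12 * c2 x) * E x ∧
        c1 x * D g11 g22 g12 (c1 x) (c2 x) * deriv c2 x =
          -(z2 * (1 + g11 * c1 x) - z1 * g12 * c1 x) * E x := by
  obtain ⟨a, b, ha, hb, hDab, hR, hT⟩ := exists_crossing_point cbar1 cbar2 hz1 hz2.le hg11 hg22
    hg12 (mul_lt_sq_of_D_neg hcbar1 hcbar2 hg11 hg22 hD)
  have hK : 0 < z1 + (z1 * g22 - z2 * g12) * b := by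
    nlinarith [mul_nonneg (mul_nonneg hz1.le hg22) hb.le, mul_nonneg (mul_nonneg hg12 hb.le)
      (neg_nonneg.mpr hz2.le)]
  obtain ⟨ψ, rfl, hψpos, hψ⟩ := exists_solution_separable z1 (z1 * g22 - z2 * g12) z2
    (z2 * g11 - z1 * g12) a b ha hb hK.ne'
  exact exists_crossing_solution_of_curve hz1 hz2.le hg22 hg12 ha hψpos hψ hDab hR hT
end

section
/- Fix reals z1, z2 with z2 < 0 < z1, nonnegative reals g11, g22, g12, and c̄1, c̄2 > 0, and suppose (1/c̄1 + g11)·(1/c̄2 + g22) − g12² ≥ 0. Then for every σ ≥ 0 and every real k: σ²·k⁸ + (1/c̄1 + 1/c̄2 + g11 + g22)·σ·k⁶ + σ·(z1² + z2²)·k⁴ + [(1/c̄1 + g11)·(1/c̄2 + g22) − g12²]·k⁴ + z2²·(1/c̄1 + g11) + z1²·(1/c̄2 + g22) − 2·z1·z2·g12·k² > 0. -/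
/-- Section 5.2 of the paper: if `D(c̄1, c̄2) ≥ 0`, the left-hand side of the onset
equation (rel_k_sigma) of the PNP–Cahn–Hilliard linearization is strictly positive for
every gradient-energy coefficient `σ ≥ 0` and every wavenumber `k`; hence
`D(c̄1, c̄2) < 0` is a necessary condition for instability of the homogeneous state. -/
theorem stmt13 (z1 z2 g11 g22 g12 cbar1 cbar2 : ℝ)
    (hz2 : z2 < 0) (hz1 : 0 < z1)
    (hg11 : 0 ≤ g11) (hg22 : 0 ≤ g22) (hg12 : 0 ≤ g12)
    (hcbar1 : 0 < cbar1) (hcbar2 : 0 < cbar2)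
    (hD : 0 ≤ (1 / cbar1 + g11) * (1 / cbar2 + g22) - g12 ^ 2) :
    ∀ σ : ℝ, 0 ≤ σ → ∀ k : ℝ,
      0 < σ ^ 2 * k ^ 8 +
        (1 / cbar1 + 1 / cbar2 + g11 + g22) * σ * k ^ 6 +
        σ * (z1 ^ 2 + z2 ^ 2) * k ^ 4 +
        ((1 / cbar1 + g11) * (1 / cbar2 + g22) - g12 ^ 2) * k ^ 4 +
        z2 ^ 2 * (1 / cbar1 + g11) + z1 ^ 2 * (1 / cbar2 + g22) -
        2 * z1 * z2 * g12 * k ^ 2 := by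
  intro σ hσ k
  have ha : 0 < 1 / cbar1 + g11 := by positivity
  have hb : 0 < 1 / cbar2 + g22 := by positivity
  nlinarith [sq_nonneg (σ * k ^ 4), sq_nonneg (k ^ 2), sq_nonneg k,
    mul_nonneg hσ (sq_nonneg (k ^ 3)), mul_nonneg hσ (sq_nonneg (k ^ 2)),
    mul_nonneg (mul_nonneg (mul_nonneg hz1.le (neg_pos.2 hz2).le) hg12) (sq_nonneg k),
    mul_nonneg hD (sq_nonneg (k ^ 2)),
    mul_pos (mul_pos (neg_pos.2 hz2) (neg_pos.2 hz2)) ha, mul_pos (mul_pos hz1 hz1) hb]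
end

section
/- Let g ≥ 0, c̄ > 0, and g12 > g + 1/c̄. Set γ = g12 − g − 1/c̄, σ_c = γ²/8, and k_c = 2/√γ. Then for every real k: (σ_c·k⁴ + (g + 1/c̄)·k² + 1)² − (g12·k² − 1)² ≥ 0, with equality if and only if k = 0 or k = k_c or k = −k_c. -/
/-- Section 5.2 of the paper (symmetric case): at the critical gradient-energy coefficient
`σ_c = (g12 − g12^crit)²/8` the determinant of the linearization matrix of the
PNP–Cahn–Hilliard system about the homogeneous state is nonnegative for all wavenumbers,
vanishing exactly at `k = 0` and at the critical wavenumbers `k = ±k_c`,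
`k_c = 2/√(g12 − g12^crit)`, where `g12^crit = g + 1/c̄`. -/
theorem stmt14 (g cbar g12 : ℝ)
    (hg : 0 ≤ g) (hcbar : 0 < cbar) (hg12 : g + 1 / cbar < g12)
    (γ σc kc : ℝ)
    (hγ : γ = g12 - g - 1 / cbar)
    (hσc : σc = γ ^ 2 / 8)
    (hkc : kc = 2 / Real.sqrt γ) :
    ∀ k : ℝ,
      0 ≤ (σc * k ^ 4 + (g + 1 / cbar) * k ^ 2 + 1) ^ 2 - (g12 * k ^ 2 - 1) ^ 2 ∧
      ((σc * k ^ 4 + (g + 1 / cbar) * k ^ 2 + 1) ^ 2 - (g12 * k ^ 2 - 1) ^ 2 = 0 ↔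
        k = 0 ∨ k = kc ∨ k = -kc) := by
  have hγpos : 0 < γ := by rw [hγ]; linarith
  have hkc2 : γ * kc ^ 2 = 4 := by
    rw [hkc, div_pow, Real.sq_sqrt hγpos.le]
    field_simp
    norm_num
  have hb : 0 < g + 1 / cbar := by positivity
  set b := g + 1 / cbar with hbdef
  have hg12' : g12 = b + γ := by rw [hγ, hbdef]; ring
  intro k
  have hfac : (σc * k ^ 4 + b * k ^ 2 + 1) ^ 2 - (g12 * k ^ 2 - 1) ^ 2
      = (1 / 8) * (γ * k ^ 2 - 4) ^ 2 * (k ^ 2 * (σc * k ^ 2 + 2 * b + γ)) := by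
    rw [hσc, hg12']; ring
  have hσnn : 0 ≤ σc := by rw [hσc]; positivity
  have hpos : 0 < σc * k ^ 2 + 2 * b + γ := by nlinarith [sq_nonneg k, mul_nonneg hσnn (sq_nonneg k)]
  refine ⟨by rw [hfac]; positivity, ?_⟩
  rw [hfac]
  constructor
  · intro h
    rcases mul_eq_zero.mp h with h1 | h2
    · rcases mul_eq_zero.mp h1 with h3 | h4
      · norm_num at h3
      · have hksq : γ * k ^ 2 = 4 := by nlinarith [sq_nonneg (γ * k ^ 2 - 4)]
        have hk2 : k ^ 2 = kc ^ 2 :=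
          mul_left_cancel₀ hγpos.ne' (hksq.trans hkc2.symm)
        have hfac2 : (k - kc) * (k + kc) = 0 := by linear_combination hk2
        rcases mul_eq_zero.mp hfac2 with h5 | h5
        · right; left; linarith
        · right; right; linarith
    · rcases mul_eq_zero.mp h2 with h3 | h4
      · left; exact pow_eq_zero_iff (by norm_num) |>.mp h3
      · exact absurd h4 hpos.ne'
  · rintro (rfl | h | h)
    · ring
    · rw [h]
      have h4 : γ * kc ^ 2 - 4 = 0 := by linarith
      rw [h4]; ring
    · rw [h]
      have h4 : γ * (-kc) ^ 2 - 4 = 0 := by linear_combination hkc2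
      rw [h4]; ring
end

section
/- Let g ≥ 0, c̄ > 0, and g12 > g + 1/c̄, and set σ_c = (g12 − g − 1/c̄)²/8. Then for every σ > σ_c and every real k ≠ 0, the 2×2 symmetric real matrix with both diagonal entries equal to σ·k⁴ + (g + 1/c̄)·k² + 1 and both off-diagonal entries equal to g12·k² − 1 is positive definite. -/
/-!
Write the matrix as `!![a, b; b, a]`; it is positive definite exactly when `|b| < a`, since its
quadratic form is `((a + b) (x₀ + x₁)² + (a - b) (x₀ - x₁)²) / 2`. With `t = k²` and
`d = g₁₂ - g - 1/c̄ > 0`, one has `a + b = σ t² + (g + 1/c̄ + g₁₂) t > 0` for `t > 0`, while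
`a - b = σ t² - d t + 2` is a quadratic in `t` of discriminant `d² - 8σ < 0`.
-/

open Matrix

theorem quadratic_pos_of_discrim_neg {K : Type*} [Field K] [LinearOrder K]
    [IsStrictOrderedRing K] {a b c : K} (ha : 0 < a) (h : discrim a b c < 0) (x : K) :
    0 < a * (x * x) + b * x + c := by
  have hsq : 4 * a * (a * (x * x) + b * x + c) = (2 * a * x + b) ^ 2 - discrim a b c := by
    rw [discrim]; ring
  have : 0 < 4 * a * (a * (x * x) + b * x + c) := by
    rw [hsq]; linarith [sq_nonneg (2 * a * x + b)]
  exact pos_of_mul_pos_right this (by positivity)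

theorem Matrix.posDef_fin_two_of_abs_lt {K : Type*} [Field K] [LinearOrder K]
    [IsStrictOrderedRing K] [StarRing K] [TrivialStar K] {a b : K} (h : |b| < a) :
    (!![a, b; b, a] : Matrix (Fin 2) (Fin 2) K).PosDef := by
  obtain ⟨hsum, hdiff⟩ : 0 < a + b ∧ 0 < a - b := by
    constructor <;> linarith [abs_lt.mp h]
  refine posDef_iff_dotProduct_mulVec.mpr ⟨?_, fun x hx => ?_⟩
  · ext i j
    fin_cases i <;> fin_cases j <;> simp
  have hne_zero : x 0 + x 1 ≠ 0 ∨ x 0 - x 1 ≠ 0 := by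
    by_contra! hzero
    exact hx (by ext i; fin_cases i <;> simp <;> linarith [hzero.1, hzero.2])
  have hform : star x ⬝ᵥ (!![a, b; b, a] *ᵥ x)
      = ((a + b) * (x 0 + x 1) ^ 2 + (a - b) * (x 0 - x 1) ^ 2) / 2 := by
    simp only [star_trivial, dotProduct, mulVec, Fin.sum_univ_two, of_apply, cons_val',
      cons_val_zero, cons_val_one, empty_val', cons_val_fin_one]
    ring
  rw [hform]
  have hplus := mul_nonneg hsum.le (sq_nonneg (x 0 + x 1))
  have hminus := mul_nonneg hdiff.le (sq_nonneg (x 0 - x 1))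
  rcases hne_zero with hne | hne
  · linarith [mul_pos hsum (sq_pos_iff.mpr hne)]
  · linarith [mul_pos hdiff (sq_pos_iff.mpr hne)]

/-- Section 5.2 of the paper (symmetric case): above the instability onset `σ > σ_c`, the
matrix `−M(k)·diag(c̄, c̄)⁻¹`, where `M(k)` is the linearization of the PNP–Cahn–Hilliard
system about the homogeneous state, is positive definite for every wavenumber `k ≠ 0`;
hence the homogeneous state is linearly stable. -/
theorem stmt15 (g cbar g12 : ℝ)
    (hg : 0 ≤ g) (hcbar : 0 < cbar) (hg12 : g + 1 / cbar < g12)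
    (σc : ℝ) (hσc : σc = (g12 - g - 1 / cbar) ^ 2 / 8) :
    ∀ σ : ℝ, σc < σ → ∀ k : ℝ, k ≠ 0 →
      (!![σ * k ^ 4 + (g + 1 / cbar) * k ^ 2 + 1, g12 * k ^ 2 - 1;
          g12 * k ^ 2 - 1, σ * k ^ 4 + (g + 1 / cbar) * k ^ 2 + 1] :
        Matrix (Fin 2) (Fin 2) ℝ).PosDef := by
  intro σ hσ k hk
  set d := g12 - g - 1 / cbar
  have hσpos : 0 < σ := by linarith [sq_nonneg d]
  have hdiscrim : discrim σ (-d) 2 < 0 := by rw [discrim]; linarith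
  have hk2 : 0 < k ^ 2 := by positivity
  apply posDef_fin_two_of_abs_lt
  rw [abs_lt]
  constructor
  · have hsum : 0 < g + 1 / cbar + g12 := by linarith [one_div_pos.mpr hcbar]
    have : 0 < σ * k ^ 4 + (g + 1 / cbar + g12) * k ^ 2 := by positivity
    linarith
  · have := quadratic_pos_of_discrim_neg hσpos hdiscrim (k ^ 2)
    linarith
end
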